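/- arXiv:1309.1268 — 4 statements merged into one kernel-verified Lean document; each statement's English description precedes it below -/
import Mathlib

section
/- Consider the one-dimensional contextual (array insertion) grammar G_line over the alphabet {S̄, E, L, R} with axiom E S̄ E and the four contextual rules of norm 1: (i) insert E immediately to the right of an E, (ii) insert E immediately to the left of an E, (iii) insert R immediately to the right of an E, (iv) insert L immediately to the left of an E. Then the language generated by G_line in the *-mode (all arrays reachable from the axiom) is exactly [L_*(G_line)] = { L E^n S̄ E^m R, E^n S̄ E^m R, L E^n S̄ E^m, E^n S̄ E^m : n, m ≥ 1 } (up to translation). -/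
namespace AID

/-! ### One-dimensional arrays over ℕ (with `none` as the blank symbol `#`) -/

/-- A one-dimensional array: a map from ℤ to symbols (`none` = blank `#`). -/
abbrev Arr := ℤ → Option ℕ

/-- The shape of the array (set of non-blank positions) is finite. -/
def FinShape (A : Arr) : Prop := {v : ℤ | A v ≠ none}.Finite

/-- Equivalence of arrays up to translation. -/
def EquivT (A B : Arr) : Prop := ∃ v : ℤ, ∀ w : ℤ, A w = B (w - v)

/-- The set of symbols occurring in an array. -/
def symbolsOf (A : ℤ → Option ℕ) : Set ℕ := {s | ∃ v, A v = some s}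

/-- All symbols of the array belong to the alphabet `T`. -/
def overAlph (T : Finset ℕ) (A : Arr) : Prop := ∀ s ∈ symbolsOf A, s ∈ T

/-- The array corresponding to a string `w`, placing `w` on positions `0, …, |w|-1`. -/
def strToArr (w : List ℕ) : Arr := fun z => if 0 ≤ z then w[z.toNat]? else none

/-! ### Arbitrary array rewriting rules and 1-ARBA grammars -/

/-- An arbitrary (one-dimensional) array rewriting rule `(W, 𝒜₁, 𝒜₂)`:
only the values of `A1`, `A2` on `W` matter. -/
structure ArrRule where
  W : Finset ℤ
  A1 : ℤ → Option ℕ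
  A2 : ℤ → Option ℕ

/-- Application of an array rule at translation `v`: the pattern `A1` occurs at `τ_v W`
in `C1`; it gets replaced by `A2`, everything else is unchanged. -/
def ArrRule.applyAt (p : ArrRule) (v : ℤ) (C1 C2 : Arr) : Prop :=
  (∀ w : ℤ, w - v ∉ p.W → C1 w = C2 w) ∧
  ∀ w ∈ p.W, C1 (v + w) = p.A1 w ∧ C2 (v + w) = p.A2 w

def ArrRule.applies (p : ArrRule) (C1 C2 : Arr) : Prop := ∃ v, p.applyAt v C1 C2

/-- A one-dimensional array grammar of type 1-ARBA. -/
structure Grammar where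
  N : Finset ℕ
  T : Finset ℕ
  disj : Disjoint N T
  ax : Arr
  axFin : FinShape ax
  axAlph : ∀ s ∈ symbolsOf ax, s ∈ N ∪ T
  P : List ArrRule
  PAlph : ∀ p ∈ P, (∀ s ∈ symbolsOf p.A1, s ∈ N ∪ T) ∧ ∀ s ∈ symbolsOf p.A2, s ∈ N ∪ T

def Grammar.step (G : Grammar) (A B : Arr) : Prop := ∃ p ∈ G.P, p.applies A B

def Grammar.derives (G : Grammar) : Arr → Arr → Prop := Relation.ReflTransGen G.step

/-- `L_*(G)`: all terminal arrays derivable from the axiom, up to translation. -/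
def Grammar.Lstar (G : Grammar) : Set Arr :=
  {B | ∃ A, G.derives G.ax A ∧ overAlph G.T A ∧ EquivT B A}

/-! ### Array insertion (contextual) and deletion rules -/

/-- A pair `((W₁,𝒜₁),(W₂,𝒜₂))` of a selector and a context, used both for
array insertion (contextual) rules and array deletion rules. -/
structure CtxPair where
  W1 : Finset ℤ
  W2 : Finset ℤ
  disj : Disjoint W1 W2
  A1 : ℤ → Option ℕ
  A2 : ℤ → Option ℕ

/-- The norm of the rule: the maximal distance of two positions in `W₁ ∪ W₂`. -/
def CtxPair.NormLE (r : CtxPair) (k : ℕ) : Prop :=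
  ∀ v ∈ r.W1 ∪ r.W2, ∀ w ∈ r.W1 ∪ r.W2, (v - w).natAbs ≤ k

/-- An array insertion or array deletion rule. -/
inductive IDRule where
  | ins : CtxPair → IDRule
  | del : CtxPair → IDRule

/-- The array rewriting rule corresponding to an insertion/deletion rule:
`I((W₁,𝒜₁),(W₂,𝒜₂))` acts as `(W₁ ∪ W₂, 𝒜₁, 𝒜₁ ∪ 𝒜₂)` (the positions of `W₂`
must be blank), and `D((W₁,𝒜₁),(W₂,𝒜₂))` acts as `𝒜₁ ∪ 𝒜₂ → 𝒜₁`. -/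
def IDRule.toArrRule : IDRule → ArrRule
  | .ins r => ⟨r.W1 ∪ r.W2, fun w => if w ∈ r.W1 then r.A1 w else none,
               fun w => if w ∈ r.W1 then r.A1 w else r.A2 w⟩
  | .del r => ⟨r.W1 ∪ r.W2, fun w => if w ∈ r.W1 then r.A1 w else r.A2 w,
               fun w => if w ∈ r.W1 then r.A1 w else none⟩

def IDRule.applies (r : IDRule) (C1 C2 : Arr) : Prop := r.toArrRule.applies C1 C2

def IDRule.IsIns : IDRule → Prop
  | .ins _ => True
  | .del _ => False

/-- Norm bounds: deletion rules of norm at most `kd`, insertion rules of norm at most `ki`. -/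
def IDRule.NormLE : IDRule → ℕ → ℕ → Prop
  | .ins r, _, ki => r.NormLE ki
  | .del r, kd, _ => r.NormLE kd

/-! ### Membrane structures and sequential P systems -/

/-- A membrane (tree) structure: membranes `0, …, size-1`, a parent map and a root. -/
structure MemStruct where
  size : ℕ
  pos : 0 < size
  parent : Fin size → Fin size
  root : Fin size
  parent_root : parent root = root
  reach : ∀ m, ∃ j, parent^[j] m = root

/-- The tree has height at most `n`. -/
def MemStruct.HeightLE (μ : MemStruct) (n : ℕ) : Prop := ∀ m, μ.parent^[n] m = μ.root

/-- Target indicators for P system rules. -/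
inductive Tar (n : ℕ) where
  | here : Tar n
  | out : Tar n
  | inAny : Tar n
  | inLab : Fin n → Tar n

/-- A target is simple if it is one of `here`, `out`, `in`. -/
def Tar.IsSimple {n : ℕ} : Tar n → Prop
  | .inLab _ => False
  | _ => True

/-- Semantics of moving from membrane `h` according to a target. -/
def MemStruct.move (μ : MemStruct) (h : Fin μ.size) : Tar μ.size → Fin μ.size → Prop
  | .here, h' => h' = h
  | .out, h' => h ≠ μ.root ∧ h' = μ.parent h
  | .inAny, h' => μ.parent h' = h ∧ h' ≠ h
  | .inLab m, h' => h' = m ∧ μ.parent m = h ∧ m ≠ h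

/-- A sequential P system working on single objects of type `Obj` with rules
of type `Rule`: each rule is assigned to a membrane and has a target. -/
structure PSys (Obj Rule : Type) where
  mem : MemStruct
  ax : Obj
  i0 : Fin mem.size
  rules : List (Fin mem.size × Rule × Tar mem.size)

variable {Obj Rule : Type}

/-- One computation step on configurations (object, membrane). -/
def PSys.step (app : Rule → Obj → Obj → Prop) (S : PSys Obj Rule)
    (c c' : Obj × Fin S.mem.size) : Prop :=
  ∃ r ∈ S.rules, r.1 = c.2 ∧ app r.2.1 c.1 c'.1 ∧ S.mem.move c.2 r.2.2 c'.2

/-- Results of halting computations starting from the axiom in membrane `i0`. -/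
def PSys.results (app : Rule → Obj → Obj → Prop) (S : PSys Obj Rule) : Set Obj :=
  {w | ∃ c : Obj × Fin S.mem.size, Relation.ReflTransGen (S.step app) (S.ax, S.i0) c ∧
        (¬ ∃ c', S.step app c c') ∧ w = c.1}

/-- A P system is simple if only the targets `here`, `in`, `out` occur. -/
def PSys.IsSimple (S : PSys Obj Rule) : Prop := ∀ r ∈ S.rules, r.2.2.IsSimple

/-! ### Array insertion/deletion P systems -/

/-- A sequential P system whose rules are one-dimensional array insertion and
deletion rules, with terminal alphabet `T`. -/
structure ArrPSys where
  T : Finset ℕ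
  sys : PSys Arr IDRule
  axFin : FinShape sys.ax

def ArrPSys.Lt (S : ArrPSys) : Set Arr :=
  {B | ∃ A ∈ S.sys.results IDRule.applies, overAlph S.T A ∧ EquivT B A}

def ArrPSys.IsSimple (S : ArrPSys) : Prop := S.sys.IsSimple

def ArrPSys.HeightLE (S : ArrPSys) (n : ℕ) : Prop := S.sys.mem.HeightLE n

/-- All deletion rules have norm at most `kd` and all insertion rules norm at most `ki`. -/
def ArrPSys.NormLE (S : ArrPSys) (kd ki : ℕ) : Prop :=
  ∀ r ∈ S.sys.rules, IDRule.NormLE r.2.1 kd ki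


/-! ### The contextual array grammar G_line -/

/-- A pure one-dimensional contextual (array insertion) grammar. -/
structure CtxGrammar where
  ax : Arr
  axFin : FinShape ax
  P : List CtxPair

def CtxGrammar.step (G : CtxGrammar) (A B : Arr) : Prop :=
  ∃ r ∈ G.P, (IDRule.ins r).applies A B

def CtxGrammar.derives (G : CtxGrammar) : Arr → Arr → Prop := Relation.ReflTransGen G.step

/-- `L_t(G)`: arrays derivable from the axiom to which no rule is applicable,
up to translation. -/
def CtxGrammar.Lt (G : CtxGrammar) : Set Arr :=
  {B | ∃ A, G.derives G.ax A ∧ (¬ ∃ C, G.step A C) ∧ EquivT B A}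

/-- `L_*(G)`: all arrays derivable from the axiom, up to translation. -/
def CtxGrammar.Lstar (G : CtxGrammar) : Set Arr :=
  {B | ∃ A, G.derives G.ax A ∧ EquivT B A}

/-- The contextual rule inserting `c` immediately to the right of an `s` (norm 1). -/
def ruleRight (s c : ℕ) : CtxPair :=
  ⟨{0}, {1}, by decide,
   fun z => if z = 0 then some s else none, fun z => if z = 1 then some c else none⟩

/-- The contextual rule inserting `c` immediately to the left of an `s` (norm 1). -/
def ruleLeft (s c : ℕ) : CtxPair :=
  ⟨{0}, {-1}, by decide,
   fun z => if z = 0 then some s else none, fun z => if z = -1 then some c else none⟩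

/-- The symbols `S̄`, `E`, `L`, `R`. -/
def Sb : ℕ := 0
def Esym : ℕ := 1
def Lsym : ℕ := 2
def Rsym : ℕ := 3

/-- The grammar `G_line` with axiom `E S̄ E` and the four contextual rules of norm 1. -/
def Gline : CtxGrammar where
  ax := strToArr [Esym, Sb, Esym]
  axFin := by
    apply Set.Finite.subset (Set.finite_Icc (0 : ℤ) 2)
    intro z hz
    simp only [Set.mem_setOf_eq, strToArr] at hz
    by_contra h
    simp only [Set.mem_Icc, not_and_or, not_le] at h
    rcases h with h | h
    · rw [if_neg (by omega)] at hz; exact hz rfl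
    · rw [if_pos (by omega)] at hz
      apply hz
      apply List.getElem?_eq_none
      simp only [List.length_cons, List.length_nil]
      omega
  P := [ruleRight Esym Esym, ruleLeft Esym Esym, ruleRight Esym Rsym, ruleLeft Esym Lsym]

/-- The string `L E^n S̄ E^m R`, resp. its variants without `L` and/or `R`. -/
def lineStr (n m : ℕ) : List ℕ :=
  [Lsym] ++ List.replicate n Esym ++ [Sb] ++ List.replicate m Esym ++ [Rsym]

/-! ### Auxiliary development -/

/-- Canonical derivable arrays: `S̄` at 1, `E^n` at `1-n..0`, `E^m` at `2..1+m`,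
optionally `L` at `-n` and `R` at `2+m`. -/
def arr (n m : ℕ) (bl br : Bool) : Arr := fun z =>
  if z = 1 then some Sb
  else if 1 - (n : ℤ) ≤ z ∧ z ≤ 0 then some Esym
  else if 2 ≤ z ∧ z ≤ 1 + (m : ℤ) then some Esym
  else if bl = true ∧ z = -(n : ℤ) then some Lsym
  else if br = true ∧ z = 2 + (m : ℤ) then some Rsym
  else none

lemma equivT_symm {A B : Arr} (h : EquivT A B) : EquivT B A := by
  obtain ⟨v, h⟩ := h
  refine ⟨-v, fun w => ?_⟩
  have h2 := (h (w + v)).symm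
  rw [show w + v - v = w by ring] at h2
  rw [show w - -v = w + v by ring]
  exact h2

lemma equivT_trans {A B C : Arr} (h1 : EquivT A B) (h2 : EquivT B C) : EquivT A C := by
  obtain ⟨v, h1⟩ := h1; obtain ⟨u, h2⟩ := h2
  exact ⟨v + u, fun w => by rw [h1 w, h2 (w - v), show w - v - u = w - (v + u) by ring]⟩

lemma ax_eq : Gline.ax = arr 1 1 false false := by
  funext z
  simp only [Gline, strToArr, arr]
  have hz : z < 0 ∨ z = 0 ∨ z = 1 ∨ z = 2 ∨ 3 ≤ z := by omega
  rcases hz with h | rfl | rfl | rfl | h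
  · rw [if_neg (by omega)]
    split_ifs <;> simp_all <;> omega
  · norm_num [Sb, Esym] <;> decide
  · norm_num [Sb, Esym] <;> decide
  · norm_num [Sb, Esym] <;> decide
  · rw [if_pos (by omega), List.getElem?_eq_none (by simp; omega)]
    split_ifs <;> simp_all <;> omega

lemma insRight_iff (s c : ℕ) (A B : Arr) :
    (IDRule.ins (ruleRight s c)).applies A B ↔
      ∃ v : ℤ, A v = some s ∧ A (v + 1) = none ∧
        B = Function.update A (v + 1) (some c) := by
  constructor
  · rintro ⟨v, h1, h2⟩
    have e0 := h2 0 (by simp [IDRule.toArrRule, ruleRight])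
    have e1 := h2 1 (by simp [IDRule.toArrRule, ruleRight])
    simp only [IDRule.toArrRule, ruleRight, add_zero] at e0 e1
    norm_num at e0 e1
    refine ⟨v, e0.1, e1.1, ?_⟩
    funext w
    by_cases hw1 : w = v + 1
    · subst hw1; rw [Function.update_self]; exact e1.2
    · rw [Function.update_of_ne hw1]
      by_cases hw0 : w = v
      · subst hw0; rw [e0.2, e0.1]
      · exact (h1 w (by simp [IDRule.toArrRule, ruleRight]; omega)).symm
  · rintro ⟨v, hA, hA1, rfl⟩
    refine ⟨v, fun w hw => ?_, fun w hw => ?_⟩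
    · simp only [IDRule.toArrRule, ruleRight, Finset.mem_union, Finset.mem_singleton] at hw
      rw [Function.update_of_ne (by omega)]
    · simp only [IDRule.toArrRule, ruleRight, Finset.mem_union, Finset.mem_singleton] at hw
      rcases hw with rfl | rfl
      · simp [IDRule.toArrRule, ruleRight, Function.update_apply, hA,
          show v + 0 ≠ v + 1 by omega, show v ≠ v + 1 by omega]
      · simp [IDRule.toArrRule, ruleRight, Function.update_apply, hA1]

lemma insLeft_iff (s c : ℕ) (A B : Arr) :
    (IDRule.ins (ruleLeft s c)).applies A B ↔
      ∃ v : ℤ, A v = some s ∧ A (v - 1) = none ∧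
        B = Function.update A (v - 1) (some c) := by
  constructor
  · rintro ⟨v, h1, h2⟩
    have e0 := h2 0 (by simp [IDRule.toArrRule, ruleLeft])
    have e1 := h2 (-1) (by simp [IDRule.toArrRule, ruleLeft])
    simp only [IDRule.toArrRule, ruleLeft, add_zero] at e0 e1
    norm_num at e0 e1
    rw [show v + -1 = v - 1 by ring] at e1
    refine ⟨v, e0.1, e1.1, ?_⟩
    funext w
    by_cases hw1 : w = v - 1
    · subst hw1; rw [Function.update_self]; exact e1.2
    · rw [Function.update_of_ne hw1]
      by_cases hw0 : w = v
      · subst hw0; rw [e0.2, e0.1]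
      · exact (h1 w (by simp [IDRule.toArrRule, ruleLeft]; omega)).symm
  · rintro ⟨v, hA, hA1, rfl⟩
    refine ⟨v, fun w hw => ?_, fun w hw => ?_⟩
    · simp only [IDRule.toArrRule, ruleLeft, Finset.mem_union, Finset.mem_singleton] at hw
      rw [Function.update_of_ne (by omega)]
    · simp only [IDRule.toArrRule, ruleLeft, Finset.mem_union, Finset.mem_singleton] at hw
      rcases hw with rfl | rfl
      · simp [IDRule.toArrRule, ruleLeft, Function.update_apply, hA,
          show v + 0 ≠ v - 1 by omega, show v ≠ v - 1 by omega]
      · simp [IDRule.toArrRule, ruleLeft, Function.update_apply, hA1,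
          show v + -1 = v - 1 by ring]

lemma arr_eq_E {n m : ℕ} {bl br : Bool} {v : ℤ} (h : arr n m bl br v = some Esym) :
    (1 - (n : ℤ) ≤ v ∧ v ≤ 0) ∨ (2 ≤ v ∧ v ≤ 1 + (m : ℤ)) := by
  simp only [arr] at h
  split_ifs at h <;> simp_all [Sb, Esym, Lsym, Rsym]

lemma arr_none {n m : ℕ} {bl br : Bool} {z : ℤ} (h : arr n m bl br z = none) :
    z ≠ 1 ∧ ¬(1 - (n : ℤ) ≤ z ∧ z ≤ 0) ∧ ¬(2 ≤ z ∧ z ≤ 1 + (m : ℤ)) ∧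
      ¬(bl = true ∧ z = -(n : ℤ)) ∧ ¬(br = true ∧ z = 2 + (m : ℤ)) := by
  simp only [arr] at h
  split_ifs at h <;> simp_all

lemma arr_E_right {n m : ℕ} {bl br : Bool} {v : ℤ} (hn : 1 ≤ n) (hm : 1 ≤ m)
    (h1 : arr n m bl br v = some Esym) (h2 : arr n m bl br (v + 1) = none) :
    v = 1 + (m : ℤ) ∧ br = false := by
  have hv := arr_eq_E h1
  obtain ⟨e1, e2, e3, e4, e5⟩ := arr_none h2
  have hveq : v = 1 + (m : ℤ) := by omega
  refine ⟨hveq, ?_⟩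
  cases br with
  | false => rfl
  | true => exact absurd ⟨rfl, by omega⟩ e5

lemma arr_E_left {n m : ℕ} {bl br : Bool} {v : ℤ} (hn : 1 ≤ n) (hm : 1 ≤ m)
    (h1 : arr n m bl br v = some Esym) (h2 : arr n m bl br (v - 1) = none) :
    v = 1 - (n : ℤ) ∧ bl = false := by
  have hv := arr_eq_E h1
  obtain ⟨e1, e2, e3, e4, e5⟩ := arr_none h2
  have hveq : v = 1 - (n : ℤ) := by omega
  refine ⟨hveq, ?_⟩
  cases bl with
  | false => rfl
  | true => exact absurd ⟨rfl, by omega⟩ e4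

lemma update_right_E (n m : ℕ) (bl : Bool) (hm : 1 ≤ m) :
    Function.update (arr n m bl false) (2 + (m : ℤ)) (some Esym) = arr n (m + 1) bl false := by
  funext z
  rw [Function.update_apply]
  simp only [arr]
  push_cast
  split_ifs <;> first | rfl | omega | simp_all <;> omega

lemma update_right_R (n m : ℕ) (bl : Bool) (hm : 1 ≤ m) :
    Function.update (arr n m bl false) (2 + (m : ℤ)) (some Rsym) = arr n m bl true := by
  funext z
  rw [Function.update_apply]
  simp only [arr]
  split_ifs <;> first | rfl | omega | simp_all <;> omega

lemma update_left_E (n m : ℕ) (br : Bool) (hn : 1 ≤ n) :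
    Function.update (arr n m false br) (-(n : ℤ)) (some Esym) = arr (n + 1) m false br := by
  funext z
  rw [Function.update_apply]
  simp only [arr]
  push_cast
  split_ifs <;> first | rfl | omega | simp_all <;> omega

lemma update_left_L (n m : ℕ) (br : Bool) (hn : 1 ≤ n) :
    Function.update (arr n m false br) (-(n : ℤ)) (some Lsym) = arr n m true br := by
  funext z
  rw [Function.update_apply]
  simp only [arr]
  split_ifs <;> first | rfl | omega | simp_all <;> omega

lemma arr_at_right (n m : ℕ) (bl : Bool) (hm : 1 ≤ m) :
    arr n m bl false (1 + (m : ℤ)) = some Esym ∧ arr n m bl false (1 + (m : ℤ) + 1) = none := by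
  constructor
  · simp only [arr]
    rw [if_neg (by omega), if_neg (by omega), if_pos (by omega)]
  · simp only [arr]
    rw [if_neg (by omega), if_neg (by omega), if_neg (by omega),
      if_neg (by rintro ⟨-, h⟩; omega), if_neg (by simp)]

lemma arr_at_left (n m : ℕ) (br : Bool) (hn : 1 ≤ n) :
    arr n m false br (1 - (n : ℤ)) = some Esym ∧ arr n m false br (1 - (n : ℤ) - 1) = none := by
  constructor
  · simp only [arr]
    rw [if_neg (by omega), if_pos (by omega)]
  · simp only [arr]
    rw [if_neg (by omega), if_neg (by omega), if_neg (by omega),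
      if_neg (by simp), if_neg (by rintro ⟨-, h⟩; omega)]

lemma step_right_E (n m : ℕ) (bl : Bool) (hm : 1 ≤ m) :
    Gline.step (arr n m bl false) (arr n (m + 1) bl false) := by
  refine ⟨ruleRight Esym Esym, by simp [Gline], ?_⟩
  rw [insRight_iff]
  refine ⟨1 + (m : ℤ), (arr_at_right n m bl hm).1, (arr_at_right n m bl hm).2, ?_⟩
  rw [show (1 : ℤ) + m + 1 = 2 + m by ring, update_right_E n m bl hm]

lemma step_right_R (n m : ℕ) (bl : Bool) (hm : 1 ≤ m) :
    Gline.step (arr n m bl false) (arr n m bl true) := by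
  refine ⟨ruleRight Esym Rsym, by simp [Gline], ?_⟩
  rw [insRight_iff]
  refine ⟨1 + (m : ℤ), (arr_at_right n m bl hm).1, (arr_at_right n m bl hm).2, ?_⟩
  rw [show (1 : ℤ) + m + 1 = 2 + m by ring, update_right_R n m bl hm]

lemma step_left_E (n m : ℕ) (br : Bool) (hn : 1 ≤ n) :
    Gline.step (arr n m false br) (arr (n + 1) m false br) := by
  refine ⟨ruleLeft Esym Esym, by simp [Gline], ?_⟩
  rw [insLeft_iff]
  refine ⟨1 - (n : ℤ), (arr_at_left n m br hn).1, (arr_at_left n m br hn).2, ?_⟩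
  rw [show (1 : ℤ) - n - 1 = -n by ring, update_left_E n m br hn]

lemma step_left_L (n m : ℕ) (br : Bool) (hn : 1 ≤ n) :
    Gline.step (arr n m false br) (arr n m true br) := by
  refine ⟨ruleLeft Esym Lsym, by simp [Gline], ?_⟩
  rw [insLeft_iff]
  refine ⟨1 - (n : ℤ), (arr_at_left n m br hn).1, (arr_at_left n m br hn).2, ?_⟩
  rw [show (1 : ℤ) - n - 1 = -n by ring, update_left_L n m br hn]

lemma step_closed {A B : Arr} {n m : ℕ} {bl br : Bool} (hn : 1 ≤ n) (hm : 1 ≤ m)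
    (hA : A = arr n m bl br) (h : Gline.step A B) :
    ∃ n' m' bl' br', 1 ≤ n' ∧ 1 ≤ m' ∧ B = arr n' m' bl' br' := by
  obtain ⟨r, hr, hap⟩ := h
  subst hA
  simp only [Gline, List.mem_cons, List.not_mem_nil, or_false] at hr
  rcases hr with rfl | rfl | rfl | rfl
  · rw [insRight_iff] at hap
    obtain ⟨v, h1, h2, rfl⟩ := hap
    obtain ⟨hv, rfl⟩ := arr_E_right hn hm h1 h2
    subst hv
    rw [show (1 : ℤ) + m + 1 = 2 + m by ring, update_right_E n m bl hm]
    exact ⟨n, m + 1, bl, false, hn, by omega, rfl⟩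
  · rw [insLeft_iff] at hap
    obtain ⟨v, h1, h2, rfl⟩ := hap
    obtain ⟨hv, rfl⟩ := arr_E_left hn hm h1 h2
    subst hv
    rw [show (1 : ℤ) - n - 1 = -n by ring, update_left_E n m br hn]
    exact ⟨n + 1, m, false, br, by omega, hm, rfl⟩
  · rw [insRight_iff] at hap
    obtain ⟨v, h1, h2, rfl⟩ := hap
    obtain ⟨hv, rfl⟩ := arr_E_right hn hm h1 h2
    subst hv
    rw [show (1 : ℤ) + m + 1 = 2 + m by ring, update_right_R n m bl hm]
    exact ⟨n, m, bl, true, hn, hm, rfl⟩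
  · rw [insLeft_iff] at hap
    obtain ⟨v, h1, h2, rfl⟩ := hap
    obtain ⟨hv, rfl⟩ := arr_E_left hn hm h1 h2
    subst hv
    rw [show (1 : ℤ) - n - 1 = -n by ring, update_left_L n m br hn]
    exact ⟨n, m, true, br, hn, hm, rfl⟩

lemma derives_arr (n m : ℕ) (bl br : Bool) (hn : 1 ≤ n) (hm : 1 ≤ m) :
    Gline.derives Gline.ax (arr n m bl br) := by
  have h1 : ∀ m', 1 ≤ m' → Gline.derives Gline.ax (arr 1 m' false false) := by
    intro m' hm'
    induction m' with
    | zero => omega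
    | succ k ih =>
      rcases Nat.lt_or_ge 1 (k + 1) with h | h
      · exact (ih (by omega)).tail (step_right_E 1 k false (by omega))
      · have hk : k = 0 := by omega
        subst hk
        rw [← ax_eq]
        exact Relation.ReflTransGen.refl
  have h2' : ∀ n', 1 ≤ n' → Gline.derives Gline.ax (arr n' m false false) := by
    intro n' hn'
    induction n' with
    | zero => omega
    | succ k ih =>
      rcases Nat.lt_or_ge 1 (k + 1) with h | h
      · exact (ih (by omega)).tail (step_left_E k m false (by omega))
      · have hk : k = 0 := by omega
        subst hk
        exact h1 m hm
  have h2 : Gline.derives Gline.ax (arr n m false false) := h2' n hn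
  cases bl with
  | false =>
    cases br with
    | false => exact h2
    | true => exact h2.tail (step_right_R n m false hm)
  | true =>
    cases br with
    | false => exact h2.tail (step_left_L n m false hn)
    | true => exact (h2.tail (step_left_L n m false hn)).tail (step_right_R n m true hm)

lemma strToArr_append (u v : List ℕ) (z : ℤ) :
    strToArr (u ++ v) z =
      if z < (u.length : ℤ) then strToArr u z else strToArr v (z - u.length) := by
  simp only [strToArr]
  by_cases h0 : 0 ≤ z
  · by_cases hz : z < (u.length : ℤ)
    · rw [if_pos hz, if_pos h0, if_pos h0, List.getElem?_append_left (by omega)]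
    · rw [if_neg hz, if_pos h0, if_pos (by omega),
        List.getElem?_append_right (by omega)]
      congr 1
      omega
  · rw [if_neg h0]
    split_ifs <;> first | rfl | omega

lemma strToArr_replicate (k a : ℕ) (z : ℤ) :
    strToArr (List.replicate k a) z = if 0 ≤ z ∧ z < (k : ℤ) then some a else none := by
  simp only [strToArr]
  by_cases h0 : 0 ≤ z
  · rw [if_pos h0, List.getElem?_replicate]
    by_cases hk : z.toNat < k
    · rw [if_pos hk, if_pos (by omega)]
    · rw [if_neg hk, if_neg (by omega)]
  · rw [if_neg h0, if_neg (by omega)]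

lemma strToArr_singleton (a : ℕ) (z : ℤ) :
    strToArr [a] z = if z = 0 then some a else none := by
  simp only [strToArr]
  by_cases h0 : z = 0
  · subst h0; simp
  · rw [if_neg h0]
    by_cases h1 : 0 ≤ z
    · rw [if_pos h1, List.getElem?_eq_none (by simp; omega)]
    · rw [if_neg h1]

lemma equiv_ff (n m : ℕ) (hn : 1 ≤ n) (hm : 1 ≤ m) :
    EquivT (arr n m false false)
      (strToArr (List.replicate n Esym ++ [Sb] ++ List.replicate m Esym)) := by
  refine ⟨-((n : ℤ) - 1), fun w => ?_⟩
  rw [show w - -((n : ℤ) - 1) = w + (n - 1) by ring]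
  simp only [strToArr_append, strToArr_replicate, strToArr_singleton,
    List.length_append, List.length_replicate, List.length_cons, List.length_nil, arr]
  push_cast
  split_ifs <;> first | rfl | omega | (exfalso; omega) | (simp_all [Sb, Esym, Lsym, Rsym] <;> omega)

lemma equiv_tf (n m : ℕ) (hn : 1 ≤ n) (hm : 1 ≤ m) :
    EquivT (arr n m true false)
      (strToArr ([Lsym] ++ List.replicate n Esym ++ [Sb] ++ List.replicate m Esym)) := by
  refine ⟨-(n : ℤ), fun w => ?_⟩
  rw [show w - -(n : ℤ) = w + n by ring]
  simp only [strToArr_append, strToArr_replicate, strToArr_singleton,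
    List.length_append, List.length_replicate, List.length_cons, List.length_nil, arr]
  push_cast
  split_ifs <;> first | rfl | omega | (exfalso; omega) | (simp_all [Sb, Esym, Lsym, Rsym] <;> omega)

lemma equiv_ft (n m : ℕ) (hn : 1 ≤ n) (hm : 1 ≤ m) :
    EquivT (arr n m false true)
      (strToArr (List.replicate n Esym ++ [Sb] ++ List.replicate m Esym ++ [Rsym])) := by
  refine ⟨-((n : ℤ) - 1), fun w => ?_⟩
  rw [show w - -((n : ℤ) - 1) = w + (n - 1) by ring]
  simp only [strToArr_append, strToArr_replicate, strToArr_singleton,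
    List.length_append, List.length_replicate, List.length_cons, List.length_nil, arr]
  push_cast
  split_ifs <;> first | rfl | omega | (exfalso; omega) | (simp_all [Sb, Esym, Lsym, Rsym] <;> omega)

lemma equiv_tt (n m : ℕ) (hn : 1 ≤ n) (hm : 1 ≤ m) :
    EquivT (arr n m true true)
      (strToArr ([Lsym] ++ List.replicate n Esym ++ [Sb] ++ List.replicate m Esym ++ [Rsym])) := by
  refine ⟨-(n : ℤ), fun w => ?_⟩
  rw [show w - -(n : ℤ) = w + n by ring]
  simp only [strToArr_append, strToArr_replicate, strToArr_singleton,
    List.length_append, List.length_replicate, List.length_cons, List.length_nil, arr]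
  push_cast
  split_ifs <;> first | rfl | omega | (exfalso; omega) | (simp_all [Sb, Esym, Lsym, Rsym] <;> omega)

lemma derivable_form {A : Arr} (hd : Gline.derives Gline.ax A) :
    ∃ n m : ℕ, ∃ bl br : Bool, 1 ≤ n ∧ 1 ≤ m ∧ A = arr n m bl br := by
  induction hd with
  | refl => exact ⟨1, 1, false, false, le_refl _, le_refl _, ax_eq⟩
  | tail _ hstep ih =>
    obtain ⟨n, m, bl, br, hn, hm, hA⟩ := ih
    obtain ⟨n', m', bl', br', hn', hm', hB'⟩ := step_closed hn hm hA hstep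
    exact ⟨n', m', bl', br', hn', hm', hB'⟩

/-- `[L_*(G_line)] = { L E^n S̄ E^m R, E^n S̄ E^m R, L E^n S̄ E^m,
E^n S̄ E^m : n, m ≥ 1 }`. -/
theorem Gline_Lstar :
    Gline.Lstar = {B | ∃ n m : ℕ, 1 ≤ n ∧ 1 ≤ m ∧
      (EquivT B (strToArr ([Lsym] ++ List.replicate n Esym ++ [Sb] ++
          List.replicate m Esym ++ [Rsym])) ∨
        EquivT B (strToArr (List.replicate n Esym ++ [Sb] ++
          List.replicate m Esym ++ [Rsym])) ∨
        EquivT B (strToArr ([Lsym] ++ List.replicate n Esym ++ [Sb] ++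
          List.replicate m Esym)) ∨
        EquivT B (strToArr (List.replicate n Esym ++ [Sb] ++
          List.replicate m Esym)))} := by
  ext B
  simp only [CtxGrammar.Lstar, Set.mem_setOf_eq]
  constructor
  · rintro ⟨A, hd, hB⟩
    obtain ⟨n, m, bl, br, hn, hm, rfl⟩ := derivable_form hd
    refine ⟨n, m, hn, hm, ?_⟩
    cases bl <;> cases br
    · exact Or.inr (Or.inr (Or.inr (equivT_trans hB (equiv_ff n m hn hm))))
    · exact Or.inr (Or.inl (equivT_trans hB (equiv_ft n m hn hm)))
    · exact Or.inr (Or.inr (Or.inl (equivT_trans hB (equiv_tf n m hn hm))))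
    · exact Or.inl (equivT_trans hB (equiv_tt n m hn hm))
  · rintro ⟨n, m, hn, hm, h | h | h | h⟩
    · exact ⟨arr n m true true, derives_arr n m true true hn hm,
        equivT_trans h (equivT_symm (equiv_tt n m hn hm))⟩
    · exact ⟨arr n m false true, derives_arr n m false true hn hm,
        equivT_trans h (equivT_symm (equiv_ft n m hn hm))⟩
    · exact ⟨arr n m true false, derives_arr n m true false hn hm,
        equivT_trans h (equivT_symm (equiv_tf n m hn hm))⟩
    · exact ⟨arr n m false false, derives_arr n m false false hn hm,
        equivT_trans h (equivT_symm (equiv_ff n m hn hm))⟩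

end AID
end

section
/- Every string language L ⊆ T* generated (in the *-mode, without halting condition) by a grammar using only left and right insertions and deletions of single symbols can be written in the form L = T_l* S T_r*, where T_l, T_r ⊆ T and S is a finite subset of T*. -/
namespace AID

/-! ### String insertion/deletion grammars of type D¹I¹ -/

/-- Left/right insertion and left/right deletion of single symbols. -/
inductive SRule where
  | insL : ℕ → SRule
  | insR : ℕ → SRule
  | delL : ℕ → SRule
  | delR : ℕ → SRule

def SRule.applies : SRule → List ℕ → List ℕ → Prop
  | .insL a, w, w' => w' = a :: w
  | .insR a, w, w' => w' = w ++ [a]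
  | .delL a, w, w' => w = a :: w'
  | .delR a, w, w' => w = w' ++ [a]

/-- The symbol inserted or deleted by a rule. -/
def SRule.sym : SRule → ℕ
  | .insL a => a
  | .insR a => a
  | .delL a => a
  | .delR a => a

/-- A pure string grammar of type D¹I¹ over the alphabet `T`: the axiom `ax ∈ T*` and
rules inserting/deleting single symbols of `T` at the left or right end. -/
structure SGrammar where
  T : Finset ℕ
  ax : List ℕ
  axAlph : ∀ a ∈ ax, a ∈ T
  P : List SRule
  PAlph : ∀ r ∈ P, r.sym ∈ T

def SGrammar.step (G : SGrammar) (w w' : List ℕ) : Prop := ∃ r ∈ G.P, r.applies w w'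

/-- `L_*(G)`: all strings derivable from the axiom. -/
def SGrammar.Lstar (G : SGrammar) : Set (List ℕ) :=
  {w | Relation.ReflTransGen G.step G.ax w}

namespace Aux

/-- Middles reachable from the axiom by end deletions. -/
def Mid (G : SGrammar) (m : List ℕ) : Prop :=
  ∃ u v : List ℕ, G.ax = u ++ m ++ v ∧ (∀ a ∈ u, SRule.delL a ∈ G.P) ∧
    (∀ a ∈ v, SRule.delR a ∈ G.P)

lemma snoc_inj {l₁ l₂ : List ℕ} {a b : ℕ} (h : l₁ ++ [a] = l₂ ++ [b]) :
    l₁ = l₂ ∧ a = b := by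
  have := List.append_inj' h rfl
  simpa using this

lemma reach_delL (G : SGrammar) (u t : List ℕ) (hu : ∀ a ∈ u, SRule.delL a ∈ G.P) :
    Relation.ReflTransGen G.step (u ++ t) t := by
  induction u with
  | nil => exact Relation.ReflTransGen.refl
  | cons a u ih =>
    refine Relation.ReflTransGen.head ⟨SRule.delL a, hu a (by simp), ?_⟩
      (ih fun b hb => hu b (List.mem_cons_of_mem _ hb))
    rfl

lemma reach_delR (G : SGrammar) (t v : List ℕ) (hv : ∀ a ∈ v, SRule.delR a ∈ G.P) :
    Relation.ReflTransGen G.step (t ++ v) t := by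
  induction v using List.reverseRecOn with
  | nil => simpa using Relation.ReflTransGen.refl
  | append_singleton v a ih =>
    refine Relation.ReflTransGen.head ⟨SRule.delR a, hv a (by simp), ?_⟩
      (ih fun b hb => hv b (by simp [hb]))
    show t ++ (v ++ [a]) = (t ++ v) ++ [a]
    simp

lemma reach_insL (G : SGrammar) (x m : List ℕ) (hx : ∀ a ∈ x, SRule.insL a ∈ G.P) :
    Relation.ReflTransGen G.step m (x ++ m) := by
  induction x with
  | nil => exact Relation.ReflTransGen.refl
  | cons a x ih =>
    refine Relation.ReflTransGen.tail (ih fun b hb => hx b (List.mem_cons_of_mem _ hb))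
      ⟨SRule.insL a, hx a (by simp), rfl⟩

lemma reach_insR (G : SGrammar) (w y : List ℕ) (hy : ∀ a ∈ y, SRule.insR a ∈ G.P) :
    Relation.ReflTransGen G.step w (w ++ y) := by
  induction y using List.reverseRecOn with
  | nil => simpa using Relation.ReflTransGen.refl
  | append_singleton y a ih =>
    refine Relation.ReflTransGen.tail (ih fun b hb => hy b (by simp [hb]))
      ⟨SRule.insR a, hy a (by simp), ?_⟩
    show w ++ (y ++ [a]) = (w ++ y) ++ [a]
    simp

/-- Invariant: reachable words factor as inserted-left ++ middle ++ inserted-right. -/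
def Good (G : SGrammar) (w : List ℕ) : Prop :=
  ∃ x m y : List ℕ, (∀ a ∈ x, SRule.insL a ∈ G.P) ∧ Mid G m ∧
    (∀ a ∈ y, SRule.insR a ∈ G.P) ∧ w = x ++ m ++ y

lemma good_step (G : SGrammar) {w w' : List ℕ} (hw : Good G w) (hs : G.step w w') :
    Good G w' := by
  obtain ⟨x, m, y, hx, hm, hy, rfl⟩ := hw
  obtain ⟨r, hr, ha⟩ := hs
  cases r with
  | insL a =>
    simp only [SRule.applies] at ha
    exact ⟨a :: x, m, y, by
      intro b hb
      rcases List.mem_cons.1 hb with h | h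
      · exact h ▸ hr
      · exact hx b h, hm, hy, by simp [ha]⟩
  | insR a =>
    simp only [SRule.applies] at ha
    exact ⟨x, m, y ++ [a], hx, hm, by
      intro b hb
      rcases List.mem_append.1 hb with h | h
      · exact hy b h
      · simpa using (List.mem_singleton.1 h) ▸ hr, by simp [ha]⟩
  | delL a =>
    simp only [SRule.applies] at ha
    cases x with
    | cons b x' =>
      rw [List.cons_append, List.cons_append] at ha
      obtain ⟨rfl, hw'⟩ : b = a ∧ x' ++ m ++ y = w' := by
        injection ha with h1 h2
        exact ⟨h1, h2⟩
      exact ⟨x', m, y, fun c hc => hx c (List.mem_cons_of_mem _ hc), hm, hy, hw'.symm⟩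
    | nil =>
      cases m with
      | cons b m' =>
        simp only [List.nil_append, List.cons_append] at ha
        obtain ⟨rfl, hw'⟩ : b = a ∧ m' ++ y = w' := by
          injection ha with h1 h2
          exact ⟨h1, h2⟩
        obtain ⟨u, v, hax, hu, hv⟩ := hm
        refine ⟨[], m', y, by simp, ⟨u ++ [b], v, ?_, ?_, hv⟩, hy, by simp [← hw']⟩
        · simp [hax]
        · intro c hc
          rcases List.mem_append.1 hc with h | h
          · exact hu c h
          · exact (List.mem_singleton.1 h) ▸ hr
      | nil =>
        cases y with
        | nil => simp at ha
        | cons b y' =>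
          simp only [List.nil_append, List.cons_append] at ha
          obtain ⟨rfl, hw'⟩ : b = a ∧ y' = w' := by
            injection ha with h1 h2
            exact ⟨h1, h2⟩
          exact ⟨[], [], y', by simp, hm, fun c hc => hy c (List.mem_cons_of_mem _ hc),
            by simp [← hw']⟩
  | delR a =>
    simp only [SRule.applies] at ha
    rcases y.eq_nil_or_concat with rfl | ⟨y', b, rfl⟩
    · rcases m.eq_nil_or_concat with rfl | ⟨m', b, rfl⟩
      · rcases x.eq_nil_or_concat with rfl | ⟨x', b, rfl⟩
        · simp at ha
        · simp only [List.concat_eq_append, List.append_nil] at ha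
          obtain ⟨rfl, rfl⟩ := snoc_inj ha.symm
          exact ⟨w', [], [], fun c hc => hx c (by simp [hc]), hm, by simp, by simp⟩
      · simp only [List.concat_eq_append, List.append_nil] at ha
        rw [← List.append_assoc] at ha
        obtain ⟨hxm, rfl⟩ := snoc_inj ha.symm
        obtain ⟨u, v, hax, hu, hv⟩ := hm
        refine ⟨x, m', [], hx, ⟨u, a :: v, ?_, hu, ?_⟩, by simp, by simp [hxm]⟩
        · rw [hax]; simp
        · intro c hc
          rcases List.mem_cons.1 hc with h | h
          · exact h ▸ hr
          · exact hv c h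
    · simp only [List.concat_eq_append] at ha hy
      rw [← List.append_assoc] at ha
      obtain ⟨hxy, rfl⟩ := snoc_inj ha
      exact ⟨x, m, y', hx, hm, fun c hc => hy c (by simp [hc]), hxy.symm⟩

lemma good_of_reach (G : SGrammar) {w : List ℕ}
    (h : Relation.ReflTransGen G.step G.ax w) : Good G w := by
  induction h with
  | refl =>
    exact ⟨[], G.ax, [], by simp, ⟨[], [], by simp, by simp, by simp⟩, by simp, by simp⟩
  | tail _ hstep ih => exact good_step G ih hstep

lemma finite_mid (G : SGrammar) : {m | Mid G m}.Finite := by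
  apply Set.Finite.subset (G.ax.tails.flatMap List.inits).finite_toSet
  rintro m ⟨u, v, hax, -, -⟩
  simp only [List.coe_toFinset, Set.mem_setOf_eq, List.mem_flatMap, List.mem_tails,
    List.mem_inits]
  exact ⟨m ++ v, ⟨u, by rw [hax]; simp⟩, ⟨v, rfl⟩⟩

end Aux

/-- Every language `L ⊆ T*` generated in the *-mode by a grammar using
only left and right insertions and deletions of single symbols can be written as
`L = T_l* S T_r*` with `T_l, T_r ⊆ T` and `S ⊆ T*` finite. -/
theorem strInsDel_star_characterization (G : SGrammar) :
    ∃ (Tl Tr : Finset ℕ) (S : Finset (List ℕ)),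
      Tl ⊆ G.T ∧ Tr ⊆ G.T ∧ (∀ s ∈ S, ∀ a ∈ s, a ∈ G.T) ∧
      G.Lstar = {w | ∃ x s y : List ℕ, (∀ a ∈ x, a ∈ Tl) ∧ s ∈ S ∧
        (∀ a ∈ y, a ∈ Tr) ∧ w = x ++ s ++ y} := by
  classical
  refine ⟨G.T.filter (fun a => SRule.insL a ∈ G.P),
          G.T.filter (fun a => SRule.insR a ∈ G.P),
          (Aux.finite_mid G).toFinset,
          Finset.filter_subset _ _, Finset.filter_subset _ _, ?_, ?_⟩
  · intro s hs a ha
    rw [Set.Finite.mem_toFinset] at hs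
    obtain ⟨u, v, hax, -, -⟩ := hs
    exact G.axAlph a (by rw [hax]; simp [ha])
  · ext w
    constructor
    · intro hw
      obtain ⟨x, m, y, hx, hm, hy, rfl⟩ := Aux.good_of_reach G hw
      refine ⟨x, m, y, fun a ha => Finset.mem_filter.2 ⟨G.PAlph _ (hx a ha), hx a ha⟩,
        (Aux.finite_mid G).mem_toFinset.2 hm,
        fun a ha => Finset.mem_filter.2 ⟨G.PAlph _ (hy a ha), hy a ha⟩, rfl⟩
    · rintro ⟨x, s, y, hx, hs, hy, rfl⟩
      obtain ⟨u, v, hax, hu, hv⟩ := (Aux.finite_mid G).mem_toFinset.1 hs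
      have h1 : Relation.ReflTransGen G.step G.ax s := by
        rw [hax, List.append_assoc]
        exact (Aux.reach_delL G u (s ++ v) hu).trans (Aux.reach_delR G s v hv)
      have h2 := Aux.reach_insL G x s (fun a ha => (Finset.mem_filter.1 (hx a ha)).2)
      have h3 := Aux.reach_insR G (x ++ s) y (fun a ha => (Finset.mem_filter.1 (hy a ha)).2)
      exact (h1.trans h2).trans h3

end AID
end

section
/- The language { a^{2^n} : n ≥ 0 } over the one-letter alphabet {a} belongs to L_t(D^1I^2-LP^⟨1⟩), i.e., it is generated in the t-mode by a sequential P system of tree height 1 whose rules are left/right deletions of single symbols and left/right insertions of strings of length at most 2. -/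
namespace AID

variable {Obj Rule : Type}

/-! ### String rules of type D¹I²: insertion of strings of length at most 2,
deletion of single symbols -/

inductive S2Rule where
  | insL : List ℕ → S2Rule
  | insR : List ℕ → S2Rule
  | delL : ℕ → S2Rule
  | delR : ℕ → S2Rule

def S2Rule.applies : S2Rule → List ℕ → List ℕ → Prop
  | .insL x, w, w' => w' = x ++ w
  | .insR x, w, w' => w' = w ++ x
  | .delL a, w, w' => w = a :: w'
  | .delR a, w, w' => w = w' ++ [a]

/-- Inserted strings have length at most 2 (deleted strings consist of a single symbol
by the very shape of the rules). -/
def S2Rule.Bound : S2Rule → Prop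
  | .insL x => x.length ≤ 2
  | .insR x => x.length ≤ 2
  | .delL _ => True
  | .delR _ => True

/-- A sequential P system on strings with rules of type D¹I² (arbitrary targets allowed),
with terminal alphabet `T`. -/
structure Str2PSys where
  T : Finset ℕ
  sys : PSys (List ℕ) S2Rule

def Str2PSys.Lt (S : Str2PSys) : Set (List ℕ) :=
  {w | w ∈ S.sys.results S2Rule.applies ∧ ∀ a ∈ w, a ∈ S.T}

def Str2PSys.HeightLE (S : Str2PSys) (n : ℕ) : Prop := S.sys.mem.HeightLE n

/-! ### Auxiliary construction for Statement 9 -/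

/-- The membrane structure: a root `0` with children `1`, `2`, `3`. -/
abbrev mu4 : MemStruct :=
  ⟨4, by norm_num, fun _ => 0, 0, rfl, fun m => ⟨1, rfl⟩⟩

/-- The P system generating `{a^(2^n)}`. -/
abbrev pSys : PSys (List ℕ) S2Rule :=
  ⟨mu4, [1, 0], 0,
    [((0 : Fin 4), S2Rule.delL 0, Tar.inLab (1 : Fin 4)),
     ((0 : Fin 4), S2Rule.delL 1, Tar.inLab (2 : Fin 4)),
     ((0 : Fin 4), S2Rule.delL 1, Tar.inLab (3 : Fin 4)),
     ((1 : Fin 4), S2Rule.insR [0, 0], Tar.out),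
     ((2 : Fin 4), S2Rule.insR [1], Tar.out)]⟩

abbrev strSys : Str2PSys := ⟨{0}, pSys⟩

/-- Strings occurring in the root membrane: `0^i 1 0^j`. -/
def strA (i j : ℕ) : List ℕ := List.replicate i 0 ++ 1 :: List.replicate j 0

lemma strA_succ (i j : ℕ) : strA (i + 1) j = 0 :: strA i j := rfl

lemma strA_zero (j : ℕ) : strA 0 j = 1 :: List.replicate j 0 := rfl

lemma strA_app2 (i j : ℕ) : strA i j ++ [0, 0] = strA i (j + 2) := by
  simp [strA, List.replicate_add]

lemma repl_app1 (j : ℕ) : List.replicate j 0 ++ [(1 : ℕ)] = strA j 0 := rfl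

abbrev Cfg := List ℕ × Fin 4

abbrev pstep : Cfg → Cfg → Prop := pSys.step S2Rule.applies

/-- Invariant on reachable configurations. -/
def Inv (c : Cfg) : Prop :=
  (c.2 = 0 ∧ ∃ n i j, 2 * i + j = 2 ^ n ∧ c.1 = strA i j) ∨
  (c.2 = 1 ∧ ∃ n i j, 2 * i + j + 2 = 2 ^ n ∧ c.1 = strA i j) ∨
  (c.2 = 2 ∧ ∃ n, c.1 = List.replicate (2 ^ n) 0) ∨
  (c.2 = 3 ∧ ∃ n, c.1 = List.replicate (2 ^ n) 0)

lemma inv_step {c c' : Cfg} (h : Inv c) (hs : pstep c c') : Inv c' := by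
  obtain ⟨r, hr, hmem, happ, hmov⟩ := hs
  have hr' : r = ((0 : Fin 4), S2Rule.delL 0, Tar.inLab (1 : Fin 4)) ∨
      r = ((0 : Fin 4), S2Rule.delL 1, Tar.inLab (2 : Fin 4)) ∨
      r = ((0 : Fin 4), S2Rule.delL 1, Tar.inLab (3 : Fin 4)) ∨
      r = ((1 : Fin 4), S2Rule.insR [0, 0], Tar.out) ∨
      r = ((2 : Fin 4), S2Rule.insR [1], Tar.out) := by
    simpa [pSys, mu4] using hr
  rcases hr' with rfl | rfl | rfl | rfl | rfl
  · -- delL 0, to membrane 1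
    rcases h with ⟨h2, n, i, j, hn, hw⟩ | ⟨h2, _⟩ | ⟨h2, _⟩ | ⟨h2, _⟩ <;>
      rw [h2] at hmem <;> try exact absurd hmem (by decide)
    simp only [S2Rule.applies] at happ
    obtain ⟨hc2, -, -⟩ := hmov
    rcases i with _ | i
    · rw [hw, strA_zero] at happ; simp at happ
    · rw [hw, strA_succ] at happ
      refine Or.inr (Or.inl ⟨hc2, n, i, j, by omega, ?_⟩)
      exact (List.cons_injective happ).symm
  · -- delL 1, to membrane 2
    rcases h with ⟨h2, n, i, j, hn, hw⟩ | ⟨h2, _⟩ | ⟨h2, _⟩ | ⟨h2, _⟩ <;>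
      rw [h2] at hmem <;> try exact absurd hmem (by decide)
    simp only [S2Rule.applies] at happ
    obtain ⟨hc2, -, -⟩ := hmov
    rcases i with _ | i
    · rw [hw, strA_zero] at happ
      refine Or.inr (Or.inr (Or.inl ⟨hc2, n, ?_⟩))
      have : c'.1 = List.replicate j 0 := (List.cons_injective happ).symm
      rw [this]; congr 1; omega
    · rw [hw, strA_succ] at happ; simp at happ
  · -- delL 1, to membrane 3
    rcases h with ⟨h2, n, i, j, hn, hw⟩ | ⟨h2, _⟩ | ⟨h2, _⟩ | ⟨h2, _⟩ <;>
      rw [h2] at hmem <;> try exact absurd hmem (by decide)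
    simp only [S2Rule.applies] at happ
    obtain ⟨hc2, -, -⟩ := hmov
    rcases i with _ | i
    · rw [hw, strA_zero] at happ
      refine Or.inr (Or.inr (Or.inr ⟨hc2, n, ?_⟩))
      have : c'.1 = List.replicate j 0 := (List.cons_injective happ).symm
      rw [this]; congr 1; omega
    · rw [hw, strA_succ] at happ; simp at happ
  · -- insR [0,0], out of membrane 1
    rcases h with ⟨h2, _⟩ | ⟨h2, n, i, j, hn, hw⟩ | ⟨h2, _⟩ | ⟨h2, _⟩ <;>
      rw [h2] at hmem <;> try exact absurd hmem (by decide)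
    simp only [S2Rule.applies] at happ
    obtain ⟨-, hc2⟩ := hmov
    refine Or.inl ⟨hc2, n, i, j + 2, by omega, ?_⟩
    rw [happ, hw, strA_app2]
  · -- insR [1], out of membrane 2
    rcases h with ⟨h2, _⟩ | ⟨h2, _⟩ | ⟨h2, n, hw⟩ | ⟨h2, _⟩ <;>
      rw [h2] at hmem <;> try exact absurd hmem (by decide)
    simp only [S2Rule.applies] at happ
    obtain ⟨-, hc2⟩ := hmov
    refine Or.inl ⟨hc2, n + 1, 2 ^ n, 0, by ring, ?_⟩
    rw [happ, hw, repl_app1]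

lemma inv_reach {c : Cfg} (h : Relation.ReflTransGen pstep (pSys.ax, pSys.i0) c) :
    Inv c := by
  induction h with
  | refl => exact Or.inl ⟨rfl, 0, 0, 1, rfl, rfl⟩
  | tail _ hs ih => exact inv_step ih hs

/-- No rule is assigned to membrane 3. -/
lemma halt3 (w : List ℕ) : ¬ ∃ c', pstep (w, (3 : Fin 4)) c' := by
  rintro ⟨c', r, hr, hmem, -⟩
  have hr' : r = ((0 : Fin 4), S2Rule.delL 0, Tar.inLab (1 : Fin 4)) ∨
      r = ((0 : Fin 4), S2Rule.delL 1, Tar.inLab (2 : Fin 4)) ∨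
      r = ((0 : Fin 4), S2Rule.delL 1, Tar.inLab (3 : Fin 4)) ∨
      r = ((1 : Fin 4), S2Rule.insR [0, 0], Tar.out) ∨
      r = ((2 : Fin 4), S2Rule.insR [1], Tar.out) := by
    simpa [pSys, mu4] using hr
  rcases hr' with rfl | rfl | rfl | rfl | rfl <;> simp at hmem

/-- If no rule applies at an invariant configuration, we are in membrane 3. -/
lemma halting_mem3 {c : Cfg} (h : Inv c) (hh : ¬ ∃ c', pstep c c') :
    c.2 = 3 ∧ ∃ n, c.1 = List.replicate (2 ^ n) 0 := by
  rcases h with ⟨h2, n, i, j, hn, hw⟩ | ⟨h2, n, i, j, hn, hw⟩ | ⟨h2, n, hw⟩ | ⟨h2, hn⟩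
  · exfalso; apply hh
    rcases i with _ | i
    · -- leftmost is 1: delL 1 applies
      refine ⟨(List.replicate j 0, (2 : Fin 4)),
        ((0 : Fin 4), S2Rule.delL 1, Tar.inLab (2 : Fin 4)), ?_, h2.symm, ?_, ?_⟩
      · simp [pSys, mu4]
      · show c.1 = 1 :: List.replicate j 0; rw [hw]; rfl
      · rw [h2]; exact ⟨rfl, rfl, by decide⟩
    · -- leftmost is 0: delL 0 applies
      refine ⟨(strA i j, (1 : Fin 4)),
        ((0 : Fin 4), S2Rule.delL 0, Tar.inLab (1 : Fin 4)), ?_, h2.symm, ?_, ?_⟩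
      · simp [pSys, mu4]
      · show c.1 = 0 :: strA i j; rw [hw]; rfl
      · rw [h2]; exact ⟨rfl, rfl, by decide⟩
  · exfalso; apply hh
    refine ⟨(c.1 ++ [0, 0], (0 : Fin 4)),
      ((1 : Fin 4), S2Rule.insR [0, 0], Tar.out), ?_, h2.symm, rfl, ?_⟩
    · simp [pSys, mu4]
    · rw [h2]; exact ⟨by decide, rfl⟩
  · exfalso; apply hh
    refine ⟨(c.1 ++ [1], (0 : Fin 4)),
      ((2 : Fin 4), S2Rule.insR [1], Tar.out), ?_, h2.symm, rfl, ?_⟩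
    · simp [pSys, mu4]
    · rw [h2]; exact ⟨by decide, rfl⟩
  · exact ⟨h2, hn⟩

/-- The rotating loop in the root membrane. -/
lemma loop_reach (i : ℕ) : ∀ j, Relation.ReflTransGen pstep
    (strA i j, (0 : Fin 4)) (strA 0 (j + 2 * i), (0 : Fin 4)) := by
  induction i with
  | zero => intro j; simpa using Relation.ReflTransGen.refl
  | succ i ih =>
    intro j
    have s1 : pstep (strA (i + 1) j, (0 : Fin 4)) (strA i j, (1 : Fin 4)) := by
      refine ⟨((0 : Fin 4), S2Rule.delL 0, Tar.inLab (1 : Fin 4)), ?_, rfl, ?_, ?_⟩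
      · simp [pSys, mu4]
      · exact strA_succ i j
      · exact ⟨rfl, rfl, show (1 : Fin 4) ≠ 0 from by decide⟩
    have s2 : pstep (strA i j, (1 : Fin 4)) (strA i (j + 2), (0 : Fin 4)) := by
      refine ⟨((1 : Fin 4), S2Rule.insR [0, 0], Tar.out), ?_, rfl, ?_, ?_⟩
      · simp [pSys, mu4]
      · exact (strA_app2 i j).symm
      · exact ⟨show (1 : Fin 4) ≠ 0 from by decide, rfl⟩
    have h3 := ih (j + 2)
    have : j + 2 + 2 * i = j + 2 * (i + 1) := by ring
    rw [this] at h3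
    exact (Relation.ReflTransGen.head s1 (Relation.ReflTransGen.head s2 h3))

lemma reachA (n : ℕ) : Relation.ReflTransGen pstep
    (pSys.ax, pSys.i0) (strA 0 (2 ^ n), (0 : Fin 4)) := by
  induction n with
  | zero => simp only [pow_zero]; exact Relation.ReflTransGen.refl
  | succ n ih =>
    refine ih.trans ?_
    have s1 : pstep (strA 0 (2 ^ n), (0 : Fin 4))
        (List.replicate (2 ^ n) 0, (2 : Fin 4)) := by
      refine ⟨((0 : Fin 4), S2Rule.delL 1, Tar.inLab (2 : Fin 4)), ?_, rfl, ?_, ?_⟩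
      · simp [pSys, mu4]
      · exact strA_zero _
      · exact ⟨rfl, rfl, show (2 : Fin 4) ≠ 0 from by decide⟩
    have s2 : pstep (List.replicate (2 ^ n) 0, (2 : Fin 4))
        (strA (2 ^ n) 0, (0 : Fin 4)) := by
      refine ⟨((2 : Fin 4), S2Rule.insR [1], Tar.out), ?_, rfl, ?_, ?_⟩
      · simp [pSys, mu4]
      · exact (repl_app1 _).symm
      · exact ⟨show (2 : Fin 4) ≠ 0 from by decide, rfl⟩
    have h3 := loop_reach (2 ^ n) 0
    have : 0 + 2 * 2 ^ n = 2 ^ (n + 1) := by ring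
    rw [this] at h3
    exact Relation.ReflTransGen.head s1 (Relation.ReflTransGen.head s2 h3)

lemma reachD (n : ℕ) : Relation.ReflTransGen pstep
    (pSys.ax, pSys.i0) (List.replicate (2 ^ n) 0, (3 : Fin 4)) := by
  refine (reachA n).tail ?_
  refine ⟨((0 : Fin 4), S2Rule.delL 1, Tar.inLab (3 : Fin 4)), ?_, rfl, ?_, ?_⟩
  · simp [pSys, mu4]
  · exact strA_zero _
  · exact ⟨rfl, rfl, show (3 : Fin 4) ≠ 0 from by decide⟩

/-- `{ a^{2^n} : n ≥ 0 } ∈ L_t(D¹I²-LP⟨1⟩)`: the language of all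
powers-of-two repetitions of a single symbol is generated in the t-mode by a sequential
P system of tree height 1 whose rules are left/right deletions of single symbols and
left/right insertions of strings of length at most 2. -/
theorem powersOfTwo_in_D1I2_LP1 :
    ∃ S : Str2PSys, S.HeightLE 1 ∧ (∀ r ∈ S.sys.rules, S2Rule.Bound r.2.1) ∧
      S.T = {0} ∧ S.Lt = {w | ∃ n : ℕ, w = List.replicate (2 ^ n) 0} := by
  refine ⟨strSys, fun m => rfl, ?_, rfl, ?_⟩
  · intro r hr
    have hr' : r = ((0 : Fin 4), S2Rule.delL 0, Tar.inLab (1 : Fin 4)) ∨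
        r = ((0 : Fin 4), S2Rule.delL 1, Tar.inLab (2 : Fin 4)) ∨
        r = ((0 : Fin 4), S2Rule.delL 1, Tar.inLab (3 : Fin 4)) ∨
        r = ((1 : Fin 4), S2Rule.insR [0, 0], Tar.out) ∨
        r = ((2 : Fin 4), S2Rule.insR [1], Tar.out) := by
      simpa [strSys, pSys, mu4] using hr
    rcases hr' with rfl | rfl | rfl | rfl | rfl <;> simp [S2Rule.Bound]
  · ext w
    constructor
    · rintro ⟨⟨c, hreach, hhalt, rfl⟩, -⟩
      have hinv := inv_reach hreach
      obtain ⟨-, n, hw⟩ := halting_mem3 hinv hhalt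
      exact ⟨n, hw⟩
    · rintro ⟨n, rfl⟩
      refine ⟨⟨(List.replicate (2 ^ n) 0, (3 : Fin 4)), reachD n, halt3 _, rfl⟩, ?_⟩
      intro a ha
      simp only [List.eq_of_mem_replicate ha]
      exact Finset.mem_singleton_self 0


end AID
end

section
/- Every one-dimensional array language in L_*(1-ARBA) is generated by a one-dimensional array grammar all of whose rules are of the following two forms (Chomsky-like normal form): A → B with A ∈ N and B ∈ N ∪ T ∪ {#} (rewriting a single nonterminal at one position), and A v D → B v C with v ∈ {(1), (−1)}, A, B, C ∈ N ∪ T, D ∈ N ∪ T ∪ {#} (a rule of norm 1 rewriting the symbols at two adjacent positions). -/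
namespace AID

variable {Obj Rule : Type}

/-- An array rule is in Chomsky-like normal form w.r.t. a grammar `G`: either it is of
the form `A → B` with `A ∈ N`, `B ∈ N ∪ T ∪ {#}` (rewriting a single nonterminal at one
position), or of the form `A v D → B v C` with `v ∈ {1, -1}`, `A, B, C ∈ N ∪ T`,
`D ∈ N ∪ T ∪ {#}` (a rule of norm 1 rewriting the symbols at two adjacent positions). -/
def NormalFormRule (G : Grammar) (p : ArrRule) : Prop :=
  (p.W = {0} ∧ (∃ A ∈ G.N, p.A1 0 = some A) ∧
    (p.A2 0 = none ∨ ∃ B ∈ G.N ∪ G.T, p.A2 0 = some B)) ∨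
  (∃ v : ℤ, (v = 1 ∨ v = -1) ∧ p.W = {0, v} ∧
    (∃ A ∈ G.N ∪ G.T, p.A1 0 = some A) ∧
    (∃ B ∈ G.N ∪ G.T, p.A2 0 = some B) ∧
    (∃ C ∈ G.N ∪ G.T, p.A2 v = some C) ∧
    (p.A1 v = none ∨ ∃ D ∈ G.N ∪ G.T, p.A1 v = some D))

/-!
A single head walks over the array, carrying the content of the cell it stands on. An idle head
may move one cell left or right, or start to sweep a rule `p` of `G`: it then walks rightwards
across the window `[-radius p, radius p]` around the chosen position, checking each cell against
the left-hand side of `p` and rewriting it to the right-hand side. A cell that does not match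
stops the sweep for good, so a completed sweep is a genuine application of `p`, and every rule
used touches at most the head's cell and its neighbour.

Conversely, a derivation of the new grammar keeps at most one head, and decoding its cells yields
a sentential form of `G`, or one in the middle of a sweep (`Invariant`). A terminal array has no
head, so it is derivable in `G`.
-/

open Function

namespace ArrRule

def single (a b : Option ℕ) : ArrRule := ⟨{0}, fun _ => a, fun _ => b⟩

def pair (v : ℤ) (a d b c : Option ℕ) : ArrRule :=
  ⟨{0, v}, fun z => if z = 0 then a else d, fun z => if z = 0 then b else c⟩

theorem single_applyAt_iff {a b : Option ℕ} {u : ℤ} {C₁ C₂ : Arr} :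
    (single a b).applyAt u C₁ C₂ ↔ C₁ u = a ∧ C₂ = update C₁ u b := by
  simp only [applyAt, single, Finset.mem_singleton, forall_eq, add_zero, sub_eq_zero]
  constructor
  · rintro ⟨hfix, h₁, h₂⟩
    refine ⟨h₁, funext fun w => ?_⟩
    by_cases hw : w = u
    · simp [hw, h₂]
    · simp [hw, hfix w hw]
  · rintro ⟨h₁, rfl⟩
    exact ⟨fun w hw => by simp [hw], h₁, by simp⟩

theorem pair_applyAt_iff {v : ℤ} (hv : v ≠ 0) {a d b c : Option ℕ} {u : ℤ}
    {C₁ C₂ : Arr} :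
    (pair v a d b c).applyAt u C₁ C₂ ↔
      C₁ u = a ∧ C₁ (u + v) = d ∧ C₂ = update (update C₁ u b) (u + v) c := by
  have huv : u + v ≠ u := by omega
  simp only [applyAt, pair, Finset.mem_insert, Finset.mem_singleton, forall_eq_or_imp,
    forall_eq, add_zero, if_pos, if_neg hv, sub_eq_iff_eq_add']
  constructor
  · rintro ⟨hfix, ⟨h₁, h₂⟩, h₁', h₂'⟩
    refine ⟨h₁, h₁', funext fun w => ?_⟩
    by_cases hw : w = u + v
    · simp [hw, h₂']
    by_cases hw' : w = u
    · subst hw'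
      simp [huv.symm, h₂]
    · simp [hw, hw', hfix w (not_or.2 ⟨hw', hw⟩)]
  · rintro ⟨h₁, h₁', rfl⟩
    refine ⟨fun w hw => ?_, ⟨h₁, by simp [huv.symm]⟩, h₁', by simp⟩
    simp [not_or.1 hw]

theorem single_symbols {S : Finset ℕ} {a b : Option ℕ} (ha : a ∈ S.insertNone)
    (hb : b ∈ S.insertNone) :
    (∀ s ∈ symbolsOf (single a b).A1, s ∈ S) ∧
      ∀ s ∈ symbolsOf (single a b).A2, s ∈ S :=
  ⟨fun s ⟨_, hs⟩ => Finset.mem_insertNone.1 ha s hs,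
    fun s ⟨_, hs⟩ => Finset.mem_insertNone.1 hb s hs⟩

theorem pair_symbols {S : Finset ℕ} {v : ℤ} {a d b c : Option ℕ} (ha : a ∈ S.insertNone)
    (hd : d ∈ S.insertNone) (hb : b ∈ S.insertNone) (hc : c ∈ S.insertNone) :
    (∀ s ∈ symbolsOf (pair v a d b c).A1, s ∈ S) ∧
      ∀ s ∈ symbolsOf (pair v a d b c).A2, s ∈ S := by
  constructor <;> rintro s ⟨_, hs⟩ <;> dsimp only [pair] at hs <;> split_ifs at hs
  exacts [Finset.mem_insertNone.1 ha s hs, Finset.mem_insertNone.1 hd s hs,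
    Finset.mem_insertNone.1 hb s hs, Finset.mem_insertNone.1 hc s hs]

theorem normalFormRule_single {H : Grammar} {A : ℕ} {b : Option ℕ} (hA : A ∈ H.N)
    (hb : b ∈ (H.N ∪ H.T).insertNone) : NormalFormRule H (single (some A) b) := by
  refine Or.inl ⟨rfl, ⟨A, hA, rfl⟩, ?_⟩
  cases b with
  | none => exact Or.inl rfl
  | some B => exact Or.inr ⟨B, Finset.some_mem_insertNone.1 hb, rfl⟩

theorem normalFormRule_pair {H : Grammar} {v : ℤ} (hv : v = 1 ∨ v = -1) {A B C : ℕ}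
    {d : Option ℕ} (hA : A ∈ H.N ∪ H.T) (hd : d ∈ (H.N ∪ H.T).insertNone)
    (hB : B ∈ H.N ∪ H.T) (hC : C ∈ H.N ∪ H.T) :
    NormalFormRule H (pair v (some A) d (some B) (some C)) := by
  have hv0 : v ≠ 0 := by omega
  refine Or.inr ⟨v, hv, rfl, ⟨A, hA, rfl⟩, ⟨B, hB, rfl⟩, ⟨C, hC, if_neg hv0⟩, ?_⟩
  simp only [pair, if_neg hv0]
  cases d with
  | none => exact Or.inl rfl
  | some D => exact Or.inr ⟨D, Finset.some_mem_insertNone.1 hd, rfl⟩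

def partialApply (p : ArrRule) (v o : ℤ) (C : Arr) : Arr :=
  fun z => if z - v ∈ p.W ∧ z - v < o then p.A2 (z - v) else C z

def MatchesBelow (p : ArrRule) (v o : ℤ) (C : Arr) : Prop :=
  ∀ w ∈ p.W, w < o → C (v + w) = p.A1 w

def rewriteAt (p : ArrRule) (o : ℤ) (b : Option ℕ) : Option ℕ :=
  if o ∈ p.W then p.A2 o else b

variable {p : ArrRule} {v o : ℤ} {C : Arr}

theorem partialApply_of_forall_le (h : ∀ w ∈ p.W, o ≤ w) : p.partialApply v o C = C :=
  funext fun _ => if_neg fun hz => (h _ hz.1).not_gt hz.2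

theorem partialApply_of_not_lt {z : ℤ} (hz : ¬ z - v < o) : p.partialApply v o C z = C z :=
  if_neg fun h => hz h.2

theorem partialApply_succ :
    p.partialApply v (o + 1) C =
      update (p.partialApply v o C) (v + o) (p.rewriteAt o (C (v + o))) := by
  funext z
  by_cases hz : z = v + o
  · subst hz
    simp [partialApply, rewriteAt]
  · have : z - v ≠ o := by omega
    simp only [partialApply, update_of_ne hz]
    congr 1
    grind

theorem MatchesBelow.succ (h : p.MatchesBelow v o C) (ho : o ∈ p.W → C (v + o) = p.A1 o) :
    p.MatchesBelow v (o + 1) C := fun w hw hwo =>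
  (Int.lt_add_one_iff.1 hwo).lt_or_eq.elim (h w hw) fun hwo => hwo ▸ ho (hwo ▸ hw)

theorem applyAt_partialApply (hm : p.MatchesBelow v o C) (h : ∀ w ∈ p.W, w < o) :
    p.applyAt v C (p.partialApply v o C) := by
  refine ⟨fun w hw => ?_, fun w hw => ⟨hm w hw (h w hw), ?_⟩⟩
  · exact (if_neg fun h' => hw h'.1).symm
  · simp [partialApply, hw, h w hw]

theorem partialApply_eq_of_applyAt {C₁ C₂ : Arr}
    (ha : p.applyAt v C₁ C₂) (h : ∀ w ∈ p.W, w < o) : p.partialApply v o C₁ = C₂ := by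
  funext z
  by_cases hz : z - v ∈ p.W
  · have := (ha.2 _ hz).2
    rw [add_sub_cancel] at this
    simp [partialApply, hz, h _ hz, this]
  · simp [partialApply, hz, ha.1 z hz]

def radius (p : ArrRule) : ℕ := p.W.sup Int.natAbs

theorem mem_Icc_radius {w : ℤ} (hw : w ∈ p.W) : w ∈ Set.Icc (-(p.radius : ℤ)) p.radius := by
  have : w.natAbs ≤ p.radius := Finset.le_sup (f := Int.natAbs) hw
  constructor <;> omega

end ArrRule

namespace Grammar

variable (G : Grammar)

def rule (i : ℕ) : ArrRule := G.P.getD i ⟨∅, fun _ => none, fun _ => none⟩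

def cells : Finset (Option ℕ) := (G.N ∪ G.T).insertNone

variable {G}

theorem rule_mem {i : ℕ} (hi : i < G.P.length) : G.rule i ∈ G.P := by
  rw [rule, List.getD_eq_getElem _ _ hi]
  exact List.getElem_mem hi

theorem exists_rule_eq {p : ArrRule} (hp : p ∈ G.P) : ∃ i < G.P.length, G.rule i = p := by
  obtain ⟨i, hi, rfl⟩ := List.mem_iff_getElem.1 hp
  exact ⟨i, hi, List.getD_eq_getElem _ _ hi⟩

theorem some_mem_cells {s : ℕ} : some s ∈ G.cells ↔ s ∈ G.N ∪ G.T :=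
  Finset.some_mem_insertNone

theorem ax_mem_cells (z : ℤ) : G.ax z ∈ G.cells :=
  Finset.mem_insertNone.2 fun s hs => G.axAlph s ⟨z, hs⟩

theorem A2_mem_cells {p : ArrRule} (hp : p ∈ G.P) (w : ℤ) : p.A2 w ∈ G.cells :=
  Finset.mem_insertNone.2 fun s hs => (G.PAlph p hp).2 s ⟨w, hs⟩

theorem mem_cells_of_applyAt {p : ArrRule} (hp : p ∈ G.P) {v : ℤ} {C₁ C₂ : Arr}
    (h : p.applyAt v C₁ C₂) (hC₁ : ∀ z, C₁ z ∈ G.cells) (z : ℤ) :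
    C₂ z ∈ G.cells := by
  by_cases hz : z - v ∈ p.W
  · have := (h.2 _ hz).2
    rw [add_sub_cancel] at this
    exact this ▸ A2_mem_cells hp _
  · exact h.1 z hz ▸ hC₁ z

theorem mem_cells_of_derives {C : Arr} (h : G.derives G.ax C) (z : ℤ) : C z ∈ G.cells := by
  induction h generalizing z with
  | refl => exact ax_mem_cells z
  | tail _ hstep ih =>
    obtain ⟨p, hp, v, hv⟩ := hstep
    exact mem_cells_of_applyAt hp hv ih z

end Grammar

/-- The new symbols: a `hole` is a blank left behind by the head; the head is `idle`, or sweeping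
rule `i` and standing at offset `o` of it, and carries the content `b` of its cell. -/
inductive Mark
  | hole
  | idle (b : Option ℕ)
  | work (i : ℕ) (o : ℤ) (b : Option ℕ)
  deriving DecidableEq, Encodable

def Mark.carried : Mark → Option ℕ
  | hole => none
  | idle b => b
  | work _ _ b => b

namespace Grammar

variable (G : Grammar)

def symBound : ℕ := (G.N ∪ G.T).sup id + 1

/-- Marks are coded above all symbols of `G`, so that these keep their meaning. -/
def markSym (m : Mark) : ℕ := G.symBound + Encodable.encode m

def readSym (s : ℕ) : Option ℕ :=
  if s < G.symBound then some s else (Encodable.decode (s - G.symBound)).bind Mark.carried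

/-- The sentential form of `G` that an array of the normal-form grammar stands for. -/
def readArr (D : Arr) : Arr := fun z => (D z).bind G.readSym

def IsHeadSym (a : Option ℕ) : Prop := ∃ m ≠ Mark.hole, a = some (G.markSym m)

def heads (D : Arr) : Set ℤ := {z | G.IsHeadSym (D z)}

/-- In a rule `A v D → B v C` the cell left behind gets a symbol `B`, so a blank is left as a
`hole`, to be erased by `hole → #`. -/
def leave (b : Option ℕ) : ℕ := b.getD (G.markSym .hole)

def sweepMark (i : ℕ) (o : ℤ) (b : Option ℕ) : Mark :=
  if o ≤ (G.rule i).radius then .work i o b else .idle b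

def idleAt (C : Arr) (x : ℤ) : Arr := update C x (some (G.markSym (.idle (C x))))

variable {G}

theorem lt_symBound {s : ℕ} (hs : s ∈ G.N ∪ G.T) : s < G.symBound :=
  Nat.lt_succ_of_le (Finset.le_sup (f := id) hs)

theorem symBound_le_markSym (m : Mark) : G.symBound ≤ G.markSym m := Nat.le_add_right _ _

@[simp]
theorem markSym_inj {m m' : Mark} : G.markSym m = G.markSym m' ↔ m = m' := by
  simp [markSym, Encodable.encode_inj]

theorem markSym_notMem {m : Mark} : G.markSym m ∉ G.N ∪ G.T := fun h =>
  (lt_symBound h).not_ge (symBound_le_markSym m)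

theorem readSym_markSym (m : Mark) : G.readSym (G.markSym m) = m.carried := by
  simp [readSym, markSym]

theorem readSym_of_mem_cells {b : Option ℕ} (hb : b ∈ G.cells) : b.bind G.readSym = b := by
  cases b with
  | none => rfl
  | some s => simp [readSym, lt_symBound (some_mem_cells.1 hb)]

theorem readSym_leave {b : Option ℕ} (hb : b ∈ G.cells) : G.readSym (G.leave b) = b := by
  cases b with
  | none => simp [leave, readSym_markSym, Mark.carried]
  | some s => simpa [leave] using readSym_of_mem_cells hb

theorem readArr_update (D : Arr) (z : ℤ) (a : Option ℕ) :
    G.readArr (update D z a) = update (G.readArr D) z (a.bind G.readSym) :=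
  comp_update (fun a => Option.bind a G.readSym) D z a

theorem readArr_eq_self {C : Arr} (hC : ∀ z, C z ∈ G.cells) : G.readArr C = C :=
  funext fun z => readSym_of_mem_cells (hC z)

theorem isHeadSym_markSym {m : Mark} (hm : m ≠ .hole) : G.IsHeadSym (some (G.markSym m)) :=
  ⟨m, hm, rfl⟩

theorem not_isHeadSym_of_mem_cells {b : Option ℕ} (hb : b ∈ G.cells) : ¬ G.IsHeadSym b := by
  rintro ⟨m, -, rfl⟩
  exact markSym_notMem (some_mem_cells.1 hb)

theorem not_isHeadSym_leave {b : Option ℕ} (hb : b ∈ G.cells) :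
    ¬ G.IsHeadSym (some (G.leave b)) := by
  cases b with
  | none => rintro ⟨m, hm, h⟩; simp_all [leave]
  | some s => exact not_isHeadSym_of_mem_cells hb

theorem heads_update_subset (D : Arr) (z : ℤ) (a : Option ℕ) :
    G.heads (update D z a) ⊆ insert z (G.heads D) := by
  intro w hw
  by_cases hwz : w = z
  · exact Or.inl hwz
  · exact Or.inr (by simpa [heads, hwz] using hw)

theorem heads_update_subset_diff (D : Arr) (z : ℤ) {a : Option ℕ} (ha : ¬ G.IsHeadSym a) :
    G.heads (update D z a) ⊆ G.heads D \ {z} := by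
  intro w hw
  by_cases hwz : w = z
  · subst hwz
    simp_all [heads]
  · exact ⟨by simpa [heads, hwz] using hw, hwz⟩

variable (G)

noncomputable def offsets (i : ℕ) : Finset ℤ :=
  Finset.Icc (-((G.rule i).radius : ℤ)) (G.rule i).radius

noncomputable def marks : Finset Mark :=
  insert .hole (G.cells.image .idle ∪ (Finset.range G.P.length).biUnion fun i =>
    (G.offsets i ×ˢ G.cells).image fun ob => .work i ob.1 ob.2)

noncomputable def nonterminals : Finset ℕ := G.N ∪ G.marks.image G.markSym

inductive SimRule : ArrRule → Prop
  | erase : SimRule (.single (some (G.markSym .hole)) none)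
  | exit {b : Option ℕ} (hb : b ∈ G.cells) : SimRule (.single (some (G.markSym (.idle b))) b)
  | enter {i : ℕ} {b : Option ℕ} (hi : i < G.P.length) (hb : b ∈ G.cells) :
      SimRule (.single (some (G.markSym (.idle b)))
        (some (G.markSym (.work i (-(G.rule i).radius) b))))
  | move {v : ℤ} {b d : Option ℕ} (hv : v = 1 ∨ v = -1) (hb : b ∈ G.cells)
      (hd : d ∈ G.cells) :
      SimRule (.pair v (some (G.markSym (.idle b))) d (some (G.leave b))
        (some (G.markSym (.idle d))))
  | work {i : ℕ} {o : ℤ} {b d : Option ℕ} (hi : i < G.P.length) (ho : o ∈ G.offsets i)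
      (hb : b ∈ G.cells) (hmatch : o ∈ (G.rule i).W → b = (G.rule i).A1 o)
      (hd : d ∈ G.cells) :
      SimRule (.pair 1 (some (G.markSym (.work i o b))) d
        (some (G.leave ((G.rule i).rewriteAt o b))) (some (G.markSym (G.sweepMark i (o + 1) d))))

variable {G}

theorem finite_setOf_simRule : {r | G.SimRule r}.Finite := by
  have hc : (G.cells : Set (Option ℕ)).Finite := G.cells.finite_toSet
  have hi : (Set.Iio G.P.length).Finite := Set.finite_Iio _
  have hv : ({1, -1} : Set ℤ).Finite := Set.toFinite _
  refine (((((Set.finite_singleton (ArrRule.single (some (G.markSym .hole)) none)).union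
      (hc.image fun b => ArrRule.single (some (G.markSym (.idle b))) b)).union
    ((hi.prod hc).image fun ib => ArrRule.single (some (G.markSym (.idle ib.2)))
      (some (G.markSym (.work ib.1 (-(G.rule ib.1).radius) ib.2))))).union
    ((hv.prod (hc.prod hc)).image fun vbd =>
      ArrRule.pair vbd.1 (some (G.markSym (.idle vbd.2.1))) vbd.2.2
        (some (G.leave vbd.2.1)) (some (G.markSym (.idle vbd.2.2))))).union
    (hi.biUnion fun i _ => ((G.offsets i).finite_toSet.prod (hc.prod hc)).image fun obd =>
      ArrRule.pair 1 (some (G.markSym (.work i obd.1 obd.2.1))) obd.2.2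
        (some (G.leave ((G.rule i).rewriteAt obd.1 obd.2.1)))
        (some (G.markSym (G.sweepMark i (obd.1 + 1) obd.2.2))))).subset ?_
  rintro r (_ | @⟨b, hb⟩ | @⟨i, b, hi, hb⟩ | @⟨v, b, d, hv, hb, hd⟩ |
    @⟨i, o, b, d, hi, ho, hb, -, hd⟩)
  · simp
  · exact Or.inl (Or.inl (Or.inl (Or.inr ⟨b, hb, rfl⟩)))
  · exact Or.inl (Or.inl (Or.inr ⟨(i, b), ⟨hi, hb⟩, rfl⟩))
  · exact Or.inl (Or.inr ⟨(v, b, d), ⟨by simpa using hv, hb, hd⟩, rfl⟩)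
  · exact Or.inr (Set.mem_biUnion hi ⟨(o, b, d), ⟨ho, hb, hd⟩, rfl⟩)


theorem hole_mem_marks : Mark.hole ∈ G.marks := Finset.mem_insert_self _ _

theorem idle_mem_marks {b : Option ℕ} (hb : b ∈ G.cells) : Mark.idle b ∈ G.marks := by
  simp [marks, hb]

theorem work_mem_marks {i : ℕ} {o : ℤ} {b : Option ℕ} (hi : i < G.P.length)
    (ho : o ∈ G.offsets i) (hb : b ∈ G.cells) : Mark.work i o b ∈ G.marks := by
  simp only [marks, Finset.mem_insert, Finset.mem_union, Finset.mem_image, Finset.mem_biUnion]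
  exact Or.inr (Or.inr ⟨i, Finset.mem_range.2 hi, (o, b), Finset.mem_product.2 ⟨ho, hb⟩,
    rfl⟩)

theorem sweepMark_mem_marks {i : ℕ} {o : ℤ} {b : Option ℕ} (hi : i < G.P.length)
    (ho : -((G.rule i).radius : ℤ) ≤ o) (hb : b ∈ G.cells) :
    G.sweepMark i o b ∈ G.marks := by
  unfold sweepMark
  split_ifs with h
  · exact work_mem_marks hi (Finset.mem_Icc.2 ⟨ho, h⟩) hb
  · exact idle_mem_marks hb

theorem markSym_mem_nonterminals {m : Mark} (hm : m ∈ G.marks) :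
    G.markSym m ∈ G.nonterminals :=
  Finset.mem_union_right _ (Finset.mem_image_of_mem _ hm)

theorem some_markSym_mem {m : Mark} (hm : m ∈ G.marks) :
    some (G.markSym m) ∈ (G.nonterminals ∪ G.T).insertNone :=
  Finset.some_mem_insertNone.2 (Finset.mem_union_left _ (markSym_mem_nonterminals hm))

theorem mem_insertNone_of_mem_cells {b : Option ℕ} (hb : b ∈ G.cells) :
    b ∈ (G.nonterminals ∪ G.T).insertNone :=
  Finset.insertNone.monotone (Finset.union_subset_union_left Finset.subset_union_left) hb

theorem some_leave_mem {b : Option ℕ} (hb : b ∈ G.cells) :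
    some (G.leave b) ∈ (G.nonterminals ∪ G.T).insertNone := by
  cases b with
  | none => exact some_markSym_mem hole_mem_marks
  | some s => exact mem_insertNone_of_mem_cells hb

theorem rewriteAt_mem_cells {i : ℕ} (hi : i < G.P.length) (o : ℤ) {b : Option ℕ}
    (hb : b ∈ G.cells) : (G.rule i).rewriteAt o b ∈ G.cells := by
  unfold ArrRule.rewriteAt
  split_ifs
  exacts [A2_mem_cells (rule_mem hi) o, hb]

theorem SimRule.symbols {r : ArrRule} (h : G.SimRule r) :
    (∀ s ∈ symbolsOf r.A1, s ∈ G.nonterminals ∪ G.T) ∧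
      ∀ s ∈ symbolsOf r.A2, s ∈ G.nonterminals ∪ G.T := by
  rcases h with _ | @⟨b, hb⟩ | @⟨i, b, hi, hb⟩ | @⟨v, b, d, hv, hb, hd⟩ |
    @⟨i, o, b, d, hi, ho, hb, -, hd⟩
  · exact ArrRule.single_symbols (some_markSym_mem hole_mem_marks)
      Finset.none_mem_insertNone
  · exact ArrRule.single_symbols (some_markSym_mem (idle_mem_marks hb))
      (mem_insertNone_of_mem_cells hb)
  · exact ArrRule.single_symbols (some_markSym_mem (idle_mem_marks hb))
      (some_markSym_mem (work_mem_marks hi (Finset.mem_Icc.2 ⟨le_rfl, by omega⟩) hb))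
  · exact ArrRule.pair_symbols (some_markSym_mem (idle_mem_marks hb))
      (mem_insertNone_of_mem_cells hd) (some_leave_mem hb) (some_markSym_mem (idle_mem_marks hd))
  · exact ArrRule.pair_symbols (some_markSym_mem (work_mem_marks hi ho hb))
      (mem_insertNone_of_mem_cells hd) (some_leave_mem (rewriteAt_mem_cells hi o hb))
      (some_markSym_mem (sweepMark_mem_marks hi (by linarith [(Finset.mem_Icc.1 ho).1]) hd))

theorem idleAt_mem {C : Arr} (hC : ∀ z, C z ∈ G.cells) (x z : ℤ) :
    G.idleAt C x z ∈ (G.nonterminals ∪ G.T).insertNone := by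
  by_cases hz : z = x
  · subst hz
    simpa [idleAt] using some_markSym_mem (idle_mem_marks (hC z))
  · simpa [idleAt, hz] using mem_insertNone_of_mem_cells (hC z)

variable (G)

noncomputable def normalForm : Grammar where
  N := G.nonterminals
  T := G.T
  disj := Finset.disjoint_left.2 fun s hs hT => by
    rcases Finset.mem_union.1 hs with hN | hm
    · exact Finset.disjoint_left.1 G.disj hN hT
    · obtain ⟨m, -, rfl⟩ := Finset.mem_image.1 hm
      exact markSym_notMem (Finset.mem_union_right _ hT)
  ax := G.idleAt G.ax 0
  axFin := (G.axFin.insert 0).subset fun z hz => by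
    by_cases h : z = 0
    · exact Or.inl h
    · exact Or.inr (by simpa [idleAt, h] using hz)
  axAlph s := fun ⟨z, hz⟩ => Finset.mem_insertNone.1 (idleAt_mem ax_mem_cells 0 z) s hz
  P := finite_setOf_simRule.toFinset.toList
  PAlph _ hp := SimRule.symbols (by simpa using hp)

variable {G}

theorem mem_normalForm_P {r : ArrRule} : r ∈ G.normalForm.P ↔ G.SimRule r := by
  simp [normalForm]

theorem SimRule.normalFormRule {r : ArrRule} (h : G.SimRule r) :
    NormalFormRule G.normalForm r := by
  have hsym {m : Mark} (hm : m ∈ G.marks) : G.markSym m ∈ G.nonterminals ∪ G.T :=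
    Finset.some_mem_insertNone.1 (some_markSym_mem hm)
  rcases h with _ | @⟨b, hb⟩ | @⟨i, b, hi, hb⟩ | @⟨v, b, d, hv, hb, hd⟩ |
    @⟨i, o, b, d, hi, ho, hb, -, hd⟩
  · exact ArrRule.normalFormRule_single (markSym_mem_nonterminals hole_mem_marks)
      Finset.none_mem_insertNone
  · exact ArrRule.normalFormRule_single (markSym_mem_nonterminals (idle_mem_marks hb))
      (mem_insertNone_of_mem_cells hb)
  · exact ArrRule.normalFormRule_single (markSym_mem_nonterminals (idle_mem_marks hb))
      (some_markSym_mem (work_mem_marks hi (Finset.mem_Icc.2 ⟨le_rfl, by omega⟩) hb))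
  · exact ArrRule.normalFormRule_pair hv (hsym (idle_mem_marks hb))
      (mem_insertNone_of_mem_cells hd) (Finset.some_mem_insertNone.1 (some_leave_mem hb))
      (hsym (idle_mem_marks hd))
  · exact ArrRule.normalFormRule_pair (Or.inl rfl) (hsym (work_mem_marks hi ho hb))
      (mem_insertNone_of_mem_cells hd)
      (Finset.some_mem_insertNone.1 (some_leave_mem (rewriteAt_mem_cells hi o hb)))
      (hsym (sweepMark_mem_marks hi (by linarith [(Finset.mem_Icc.1 ho).1]) hd))

variable (G)

def Settled (D : Arr) (x : ℤ) : Prop :=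
  G.derives G.ax (G.readArr D) ∧ ∀ i o b, D x ≠ some (G.markSym (.work i o b))

/-- The head at `x` sweeps rule `i`, applied at `x - o`, and has reached its offset `o`. -/
def Sweeping (D : Arr) (x : ℤ) : Prop :=
  ∃ i o b C, D x = some (G.markSym (.work i o b)) ∧ G.derives G.ax C ∧
    (G.rule i).MatchesBelow (x - o) o C ∧ G.readArr D = (G.rule i).partialApply (x - o) o C

def Invariant (D : Arr) : Prop := ∃ x, G.heads D ⊆ {x} ∧ (G.Settled D x ∨ G.Sweeping D x)

variable {G} {D : Arr} {u : ℤ} {b d : Option ℕ}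

theorem carried_sweepMark (i : ℕ) (o : ℤ) (b : Option ℕ) :
    (G.sweepMark i o b).carried = b := by
  unfold sweepMark
  split_ifs <;> rfl

theorem readArr_update_eq {a : Option ℕ} (h : a.bind G.readSym = (D u).bind G.readSym) :
    G.readArr (update D u a) = G.readArr D := by
  rw [readArr_update, update_eq_self_iff]
  exact h

theorem mem_heads {m : Mark} (hu : D u = some (G.markSym m)) (hm : m ≠ .hole) : u ∈ G.heads D :=
  ⟨m, hm, hu⟩

theorem heads_update_update_subset (hD : G.heads D ⊆ {u}) {a : Option ℕ}
    (ha : ¬ G.IsHeadSym a) (z : ℤ) (c : Option ℕ) :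
    G.heads (update (update D u a) z c) ⊆ {z} := by
  intro w hw
  rcases heads_update_subset _ _ _ hw with rfl | hw
  · rfl
  · obtain ⟨hw, hwu⟩ := heads_update_subset_diff D u ha hw
    exact absurd (hD hw) hwu

theorem Invariant.settled_of_idle (h : G.Invariant D) (hu : D u = some (G.markSym (.idle b))) :
    G.heads D ⊆ {u} ∧ G.Settled D u := by
  obtain ⟨x, hx, hs⟩ := h
  obtain rfl : u = x := hx (mem_heads hu (by simp))
  refine ⟨hx, hs.resolve_right ?_⟩
  rintro ⟨i, o, b', C, hw, -⟩
  simp [hu] at hw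

theorem Invariant.sweeping_of_work (h : G.Invariant D) {i : ℕ} {o : ℤ}
    (hu : D u = some (G.markSym (.work i o b))) :
    G.heads D ⊆ {u} ∧ ∃ C, G.derives G.ax C ∧ (G.rule i).MatchesBelow (u - o) o C ∧
      G.readArr D = (G.rule i).partialApply (u - o) o C := by
  obtain ⟨x, hx, hs⟩ := h
  obtain rfl : u = x := hx (mem_heads hu (by simp))
  refine ⟨hx, ?_⟩
  rcases hs with ⟨-, hnw⟩ | ⟨i', o', b', C, hw, hC⟩
  · exact absurd hu (hnw i o b)
  · obtain ⟨rfl, rfl, rfl⟩ : i = i' ∧ o = o' ∧ b = b' := by simpa [hu] using hw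
    exact ⟨C, hC⟩

theorem Invariant.erase (h : G.Invariant D) (hu : D u = some (G.markSym .hole)) :
    G.Invariant (update D u none) := by
  obtain ⟨x, hx, hs⟩ := h
  have hread : G.readArr (update D u none) = G.readArr D :=
    readArr_update_eq (by simp [hu, readSym_markSym, Mark.carried])
  refine ⟨x, (heads_update_subset_diff D u (not_isHeadSym_of_mem_cells
    Finset.none_mem_insertNone)).trans (Set.sdiff_subset.trans hx), ?_⟩
  rcases hs with ⟨hder, hnw⟩ | ⟨i, o, b, C, hw, hC⟩
  · refine Or.inl ⟨hread ▸ hder, fun i o b hw => ?_⟩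
    by_cases hxu : x = u
    · simp [hxu] at hw
    · exact hnw i o b (by rwa [update_of_ne hxu] at hw)
  · have hxu : x ≠ u := by rintro rfl; simp [hu] at hw
    exact Or.inr ⟨i, o, b, C, by rwa [update_of_ne hxu], by rwa [hread]⟩

theorem Invariant.exit (h : G.Invariant D) (hu : D u = some (G.markSym (.idle b)))
    (hb : b ∈ G.cells) : G.Invariant (update D u b) := by
  obtain ⟨hx, hder, -⟩ := h.settled_of_idle hu
  refine ⟨u, (heads_update_subset_diff D u (not_isHeadSym_of_mem_cells hb)).trans
    (Set.sdiff_subset.trans hx), Or.inl ⟨?_, fun i o b' hw => ?_⟩⟩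
  · rwa [readArr_update_eq (by simp [hu, readSym_markSym, Mark.carried, readSym_of_mem_cells hb])]
  · rw [update_self] at hw
    exact not_isHeadSym_of_mem_cells hb (hw ▸ isHeadSym_markSym (by simp))

theorem Invariant.enter (h : G.Invariant D) (hu : D u = some (G.markSym (.idle b))) (i : ℕ) :
    G.Invariant (update D u (some (G.markSym (.work i (-(G.rule i).radius) b)))) := by
  obtain ⟨hx, hder, -⟩ := h.settled_of_idle hu
  have hlow {w : ℤ} (hw : w ∈ (G.rule i).W) : -((G.rule i).radius : ℤ) ≤ w :=
    (ArrRule.mem_Icc_radius hw).1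
  refine ⟨u, (heads_update_subset D u _).trans (Set.insert_subset_iff.2 ⟨rfl, hx⟩),
    Or.inr ⟨i, _, b, G.readArr D, by simp, hder,
      fun w hw hlt => absurd (hlow hw) hlt.not_ge, ?_⟩⟩
  rw [readArr_update_eq (by simp [hu, readSym_markSym, Mark.carried]),
    ArrRule.partialApply_of_forall_le fun w hw => hlow hw]

theorem Invariant.move (h : G.Invariant D) {v : ℤ} (hv : v ≠ 0)
    (hu : D u = some (G.markSym (.idle b))) (hb : b ∈ G.cells) (hd : D (u + v) = d)
    (hdc : d ∈ G.cells) :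
    G.Invariant (update (update D u (some (G.leave b))) (u + v) (some (G.markSym (.idle d)))) := by
  obtain ⟨hx, hder, -⟩ := h.settled_of_idle hu
  have huv : u + v ≠ u := by omega
  refine ⟨u + v, heads_update_update_subset hx (not_isHeadSym_leave hb) _ _,
    Or.inl ⟨?_, by simp⟩⟩
  rwa [readArr_update_eq (by simp [update_of_ne huv, hd, readSym_markSym, Mark.carried,
    readSym_of_mem_cells hdc]), readArr_update_eq (by simp [hu, readSym_markSym, Mark.carried,
    readSym_leave hb])]

theorem Invariant.work (h : G.Invariant D) {i : ℕ} {o : ℤ} (hi : i < G.P.length)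
    (hu : D u = some (G.markSym (.work i o b))) (hb : b ∈ G.cells)
    (hmatch : o ∈ (G.rule i).W → b = (G.rule i).A1 o) (hd : D (u + 1) = d)
    (hdc : d ∈ G.cells) :
    G.Invariant (update (update D u (some (G.leave ((G.rule i).rewriteAt o b)))) (u + 1)
      (some (G.markSym (G.sweepMark i (o + 1) d)))) := by
  obtain ⟨hx, C, hder, hmC, hread⟩ := h.sweeping_of_work hu
  have hCu : C u = b := by
    have := congrFun hread u
    rw [ArrRule.partialApply_of_not_lt (by omega)] at this
    simpa [readArr, hu, readSym_markSym, Mark.carried] using this.symm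
  have hread' : G.readArr (update (update D u (some (G.leave ((G.rule i).rewriteAt o b))))
      (u + 1) (some (G.markSym (G.sweepMark i (o + 1) d)))) =
      (G.rule i).partialApply (u - o) (o + 1) C := by
    rw [readArr_update_eq (by simp [hd, readSym_markSym,
      carried_sweepMark, readSym_of_mem_cells hdc]), readArr_update, hread,
      ArrRule.partialApply_succ, sub_add_cancel, hCu, Option.bind_some,
      readSym_leave (rewriteAt_mem_cells hi o hb)]
  have hmC' : (G.rule i).MatchesBelow (u - o) (o + 1) C :=
    hmC.succ fun hw => by rw [sub_add_cancel, hCu]; exact hmatch hw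
  refine ⟨u + 1, heads_update_update_subset hx (not_isHeadSym_leave
    (rewriteAt_mem_cells hi o hb)) _ _, ?_⟩
  by_cases hnext : o + 1 ≤ ((G.rule i).radius : ℤ)
  · refine Or.inr ⟨i, o + 1, d, C, by simp [sweepMark, hnext], hder, ?_, ?_⟩
    all_goals rw [show u + 1 - (o + 1) = u - o by ring]
    exacts [hmC', hread']
  · -- the head has left the window of rule `i`, which is now fully applied to `C`
    refine Or.inl ⟨?_, by simp [sweepMark, hnext]⟩
    rw [hread']
    exact hder.tail ⟨_, rule_mem hi, _, ArrRule.applyAt_partialApply hmC' fun w hw => by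
      linarith [(ArrRule.mem_Icc_radius hw).2]⟩

theorem Invariant.step {D' : Arr} (h : G.Invariant D) (hs : G.normalForm.step D D') :
    G.Invariant D' := by
  obtain ⟨r, hr, u, happ⟩ := hs
  rcases mem_normalForm_P.1 hr with _ | @⟨b, hb⟩ | @⟨i, b, hi, hb⟩ |
    @⟨v, b, d, hv, hb, hd⟩ | @⟨i, o, b, d, hi, -, hb, hmatch, hd⟩
  · obtain ⟨hu, rfl⟩ := ArrRule.single_applyAt_iff.1 happ
    exact h.erase hu
  · obtain ⟨hu, rfl⟩ := ArrRule.single_applyAt_iff.1 happ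
    exact h.exit hu hb
  · obtain ⟨hu, rfl⟩ := ArrRule.single_applyAt_iff.1 happ
    exact h.enter hu i
  · obtain ⟨hu, hud, rfl⟩ := (ArrRule.pair_applyAt_iff (by omega)).1 happ
    exact h.move (by omega) hu hb hud hd
  · obtain ⟨hu, hud, rfl⟩ := (ArrRule.pair_applyAt_iff one_ne_zero).1 happ
    exact h.work hi hu hb hmatch hud hd

theorem invariant_idleAt {C : Arr} (hC : G.derives G.ax C) (x : ℤ) :
    G.Invariant (G.idleAt C x) := by
  have hcells := mem_cells_of_derives hC
  refine ⟨x, fun z hz => ?_, Or.inl ⟨?_, by simp [idleAt]⟩⟩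
  · rcases heads_update_subset _ _ _ hz with rfl | hz
    · rfl
    · exact absurd hz (not_isHeadSym_of_mem_cells (hcells z))
  · rwa [idleAt, readArr_update_eq (by simp [readSym_markSym, Mark.carried,
      readSym_of_mem_cells (hcells x)]), readArr_eq_self hcells]

theorem Invariant.derives_of_overAlph {A : Arr} (h : G.Invariant A) (hA : overAlph G.T A) :
    G.derives G.ax A := by
  have hcells (z : ℤ) : A z ∈ G.cells :=
    Finset.mem_insertNone.2 fun s hs => Finset.mem_union_right _ (hA s ⟨z, hs⟩)
  obtain ⟨x, -, ⟨hder, -⟩ | ⟨i, o, b, -, hw, -⟩⟩ := h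
  · rwa [readArr_eq_self hcells] at hder
  · exact absurd (hw ▸ isHeadSym_markSym (by simp)) (not_isHeadSym_of_mem_cells (hcells x))

theorem Invariant.of_derives (h : G.normalForm.derives G.normalForm.ax D) : G.Invariant D := by
  induction h with
  | refl => exact invariant_idleAt .refl 0
  | tail _ hs ih => exact ih.step hs

theorem derives_of_derives_normalForm {A : Arr} (h : G.normalForm.derives G.normalForm.ax A)
    (hA : overAlph G.T A) : G.derives G.ax A :=
  (Invariant.of_derives h).derives_of_overAlph hA

theorem SimRule.step {r : ArrRule} (hr : G.SimRule r) {u : ℤ} {D₁ D₂ : Arr}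
    (h : r.applyAt u D₁ D₂) : G.normalForm.step D₁ D₂ :=
  ⟨r, mem_normalForm_P.2 hr, u, h⟩

theorem derives_leave (D : Arr) (x : ℤ) {b : Option ℕ} (hb : b ∈ G.cells) :
    G.normalForm.derives (update D x (some (G.leave b))) (update D x b) := by
  cases b with
  | none => exact .single (SimRule.erase.step (u := x)
      (ArrRule.single_applyAt_iff.2 ⟨by simp [leave], by simp⟩))
  | some s => exact .refl

theorem derives_idleAt_add {C : Arr} (hC : ∀ z, C z ∈ G.cells) {v : ℤ} (hv : v = 1 ∨ v = -1)
    (x : ℤ) : G.normalForm.derives (G.idleAt C x) (G.idleAt C (x + v)) := by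
  have hxv : x ≠ x + v := by omega
  have hmove := (SimRule.move hv (hC x) (hC (x + v))).step (u := x) (D₁ := G.idleAt C x)
    ((ArrRule.pair_applyAt_iff (by omega)).2
      ⟨by simp [idleAt], by simp [idleAt, hxv.symm], rfl⟩)
  have hleft : update (update (G.idleAt C x) x (some (G.leave (C x)))) (x + v)
      (some (G.markSym (.idle (C (x + v))))) =
      update (G.idleAt C (x + v)) x (some (G.leave (C x))) := by
    simp only [idleAt, update_idem]
    exact update_comm hxv _ _ _
  have hright : update (G.idleAt C (x + v)) x (C x) = G.idleAt C (x + v) :=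
    update_eq_self_iff.2 (by simp [idleAt, hxv])
  have hleave := derives_leave (G.idleAt C (x + v)) x (hC x)
  rw [hright, ← hleft] at hleave
  exact (Relation.ReflTransGen.single hmove).trans hleave

theorem derives_idleAt {C : Arr} (hC : ∀ z, C z ∈ G.cells) (x y : ℤ) :
    G.normalForm.derives (G.idleAt C x) (G.idleAt C y) :=
  Relation.ReflTransGen.lift' (G.idleAt C) (fun _ _ h => h) _ _ <|
    reflTransGen_of_succ (fun a b => G.normalForm.derives (G.idleAt C a) (G.idleAt C b))
      (fun z _ => by simpa using derives_idleAt_add hC (.inl rfl) z)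
      (fun z _ => by simpa using derives_idleAt_add hC (.inr rfl) (z + 1))

variable (G) in
/-- The array while the head sweeps rule `i`, applied at `v` to `C`, and stands at offset `o`. -/
def sweepArr (i : ℕ) (v : ℤ) (C : Arr) (o : ℤ) : Arr :=
  update ((G.rule i).partialApply v o C) (v + o) (some (G.markSym (G.sweepMark i o (C (v + o)))))

variable {i : ℕ} {v : ℤ} {C₁ C₂ : Arr}

theorem derives_sweepArr_succ (hi : i < G.P.length) (ha : (G.rule i).applyAt v C₁ C₂)
    (hC₁ : ∀ z, C₁ z ∈ G.cells) {o : ℤ} (ho : o ∈ G.offsets i) :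
    G.normalForm.derives (G.sweepArr i v C₁ o) (G.sweepArr i v C₁ (o + 1)) := by
  have hvo : v + o ≠ v + o + 1 := by omega
  have hwork : G.sweepMark i o (C₁ (v + o)) = .work i o (C₁ (v + o)) :=
    if_pos (Finset.mem_Icc.1 ho).2
  have hstep := (SimRule.work hi ho (hC₁ (v + o)) (fun hw => (ha.2 o hw).1)
    (hC₁ (v + o + 1))).step (u := v + o) (D₁ := G.sweepArr i v C₁ o)
    ((ArrRule.pair_applyAt_iff one_ne_zero).2 ⟨by simp [sweepArr, hwork], by
      simp [sweepArr, hvo.symm,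
        ArrRule.partialApply_of_not_lt (show ¬ v + o + 1 - v < o by omega)], rfl⟩)
  -- the step leaves `G.leave _` at `v + o`, which then becomes the rewritten content
  have hleave := derives_leave (update ((G.rule i).partialApply v o C₁) (v + o + 1)
    (some (G.markSym (G.sweepMark i (o + 1) (C₁ (v + o + 1)))))) (v + o)
    (rewriteAt_mem_cells hi o (hC₁ (v + o)))
  rw [update_comm hvo.symm,
    ← update_idem (a := v + o) (some (G.markSym (.work i o (C₁ (v + o))))),
    ← hwork, ← sweepArr, update_comm hvo.symm, ← ArrRule.partialApply_succ, add_assoc,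
    ← sweepArr] at hleave
  rw [add_assoc] at hstep
  exact (Relation.ReflTransGen.single hstep).trans hleave

theorem sweepArr_neg_radius :
    G.sweepArr i v C₁ (-(G.rule i).radius) =
      update C₁ (v - (G.rule i).radius)
        (some (G.markSym (.work i (-(G.rule i).radius) (C₁ (v - (G.rule i).radius))))) := by
  rw [sweepArr, ArrRule.partialApply_of_forall_le fun w hw => (ArrRule.mem_Icc_radius hw).1,
    ← sub_eq_add_neg, sweepMark, if_pos (by omega)]

theorem sweepArr_radius_succ (ha : (G.rule i).applyAt v C₁ C₂) :
    G.sweepArr i v C₁ ((G.rule i).radius + 1) = G.idleAt C₂ (v + ((G.rule i).radius + 1)) := by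
  have hlt (w : ℤ) (hw : w ∈ (G.rule i).W) : w < (G.rule i).radius + 1 := by
    linarith [(ArrRule.mem_Icc_radius hw).2]
  have hend := congrFun (ArrRule.partialApply_eq_of_applyAt ha hlt) (v + ((G.rule i).radius + 1))
  rw [ArrRule.partialApply_of_not_lt (by omega)] at hend
  rw [sweepArr, ArrRule.partialApply_eq_of_applyAt ha hlt, sweepMark, if_neg (by omega), hend,
    idleAt]

theorem derives_idleAt_of_applyAt (hi : i < G.P.length) (ha : (G.rule i).applyAt v C₁ C₂)
    (hC₁ : ∀ z, C₁ z ∈ G.cells) :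
    G.normalForm.derives (G.idleAt C₁ (v - (G.rule i).radius))
      (G.idleAt C₂ (v + ((G.rule i).radius + 1))) := by
  have henter := (SimRule.enter hi (hC₁ (v - (G.rule i).radius))).step
    (u := v - (G.rule i).radius) (D₁ := G.idleAt C₁ (v - (G.rule i).radius))
    (ArrRule.single_applyAt_iff.2 ⟨by simp [idleAt], rfl⟩)
  rw [idleAt, update_idem, ← sweepArr_neg_radius] at henter
  refine (Relation.ReflTransGen.single henter).trans ?_
  rw [← sweepArr_radius_succ ha]
  refine Relation.ReflTransGen.lift' (G.sweepArr i v C₁) (fun _ _ h => h) _ _ <|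
    reflTransGen_of_succ_of_le (fun a b => G.normalForm.derives (G.sweepArr i v C₁ a)
      (G.sweepArr i v C₁ b)) (fun o ho => ?_) (by omega)
  rw [Order.succ_eq_add_one]
  exact derives_sweepArr_succ hi ha hC₁ (Finset.mem_Icc.2 ⟨ho.1, by linarith [ho.2]⟩)

theorem derives_normalForm_idleAt {C : Arr} (h : G.derives G.ax C) (x : ℤ) :
    G.normalForm.derives G.normalForm.ax (G.idleAt C x) := by
  induction h generalizing x with
  | refl => exact derives_idleAt ax_mem_cells 0 x
  | tail hder hstep ih =>
    obtain ⟨p, hp, v, ha⟩ := hstep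
    obtain ⟨i, hi, rfl⟩ := exists_rule_eq hp
    have hC₁ := mem_cells_of_derives hder
    exact ((ih _).trans (derives_idleAt_of_applyAt hi ha hC₁)).trans
      (derives_idleAt (mem_cells_of_applyAt hp ha hC₁) _ x)

theorem derives_normalForm_of_derives {C : Arr} (h : G.derives G.ax C) :
    G.normalForm.derives G.normalForm.ax C :=
  (derives_normalForm_idleAt h 0).tail ((SimRule.exit (mem_cells_of_derives h 0)).step (u := 0)
    (ArrRule.single_applyAt_iff.2 ⟨by simp [idleAt], by simp [idleAt]⟩))

theorem lstar_normalForm : G.normalForm.Lstar = G.Lstar := by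
  ext B
  constructor
  · rintro ⟨A, hder, hA, hB⟩
    exact ⟨A, derives_of_derives_normalForm hder hA, hA, hB⟩
  · rintro ⟨A, hder, hA, hB⟩
    exact ⟨A, derives_normalForm_of_derives hder, hA, hB⟩

end Grammar

/-- Every one-dimensional array language in `L_*(1-ARBA)` is generated
by a one-dimensional array grammar all of whose rules are of the normal forms
`A → B` (`A ∈ N`, `B ∈ N ∪ T ∪ {#}`) or `A v D → B v C` (`v ∈ {1, -1}`,
`A, B, C ∈ N ∪ T`, `D ∈ N ∪ T ∪ {#}`). -/
theorem ARBA_chomsky_normal_form (G : Grammar) :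
    ∃ G' : Grammar, G'.T = G.T ∧ (∀ p ∈ G'.P, NormalFormRule G' p) ∧
      G'.Lstar = G.Lstar :=
  ⟨G.normalForm, rfl, fun _ hp => (Grammar.mem_normalForm_P.1 hp).normalFormRule,
    Grammar.lstar_normalForm⟩

end AID
end
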